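/- arXiv:2410.09323 — 12 statements merged into one kernel-verified Lean document; each statement's English description precedes it below -/
import Mathlib

section
/- Let $k\geq 2$ and let $g_r \in \mathbb{Z}_2[w_2,\dots,w_k]$ be defined by $g_0=1$, $g_{-1}=\cdots=g_{-k+1}=0$, and $g_r = w_2 g_{r-2} + \cdots + w_k g_{r-k}$ for $r\geq 1$. Then for every $i\geq 0$ and every $r \geq 1 + k(2^i-1)$, we have $g_r = \sum_{j=2}^k w_j^{2^i} g_{r-j\cdot 2^i}$. -/
open MvPolynomial Finset

/-!
Squaring the recurrence `g r = ∑ⱼ cⱼ g (r - dⱼ)`, i.e. substituting it into itself, gives the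
double sum `∑ⱼ ∑ₗ cⱼ cₗ g (r - dⱼ - dₗ)`, which is symmetric in `j` and `l`; in characteristic two
the off-diagonal terms cancel in pairs, leaving `∑ⱼ cⱼ² g (r - 2dⱼ)`. Iterating `i` times gives the
`2^i`-th Frobenius twist of the recurrence, valid once `r` is large enough for every substitution.
-/

namespace CharTwo

theorem sum_sum_eq_sum_diag_of_symm {R ι : Type*} [Semiring R] [CharP R 2] [DecidableEq ι]
    (s : Finset ι) (f : ι → ι → R) (hf : ∀ j l, f j l = f l j) :
    ∑ j ∈ s, ∑ l ∈ s, f j l = ∑ j ∈ s, f j j := by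
  have hoff : ∑ p ∈ s.offDiag, f p.1 p.2 = 0 := by
    refine sum_involution (fun p _ => p.swap) (fun p _ => ?_) (fun p hp _ h => ?_)
      (fun p hp => ?_) (fun p _ => rfl)
    · rw [Prod.fst_swap, Prod.snd_swap, hf p.2 p.1, add_self_eq_zero]
    · exact (mem_offDiag.mp hp).2.2 (congrArg Prod.snd h)
    · obtain ⟨h₁, h₂, hne⟩ := mem_offDiag.mp hp
      exact mem_offDiag.mpr ⟨h₂, h₁, Ne.symm hne⟩
  rw [← sum_product', ← diag_union_offDiag, sum_union (disjoint_diag_offDiag _), hoff, add_zero,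
    sum_diag]

variable {R ι : Type*} [CommRing R] [CharP R 2] [Fintype ι]

theorem recurrence_sq (a : ι → R) (e : ι → ℤ) (g : ℤ → R) (M : ℤ)
    (hrec : ∀ r, M ≤ r → g r = ∑ j, a j * g (r - e j)) (r : ℤ) (hr₀ : M ≤ r)
    (hr : ∀ j, M + e j ≤ r) :
    g r = ∑ j, a j ^ 2 * g (r - 2 * e j) := by
  classical
  calc g r = ∑ j, a j * g (r - e j) := hrec r hr₀
    _ = ∑ j, ∑ l, a j * a l * g (r - e j - e l) := by
        refine sum_congr rfl fun j _ => ?_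
        rw [hrec _ (by linarith [hr j]), mul_sum]
        simp only [mul_assoc]
    _ = ∑ j, a j * a j * g (r - e j - e j) := by
        refine sum_sum_eq_sum_diag_of_symm _ _ fun j l => ?_
        rw [mul_comm (a j), sub_right_comm]
    _ = ∑ j, a j ^ 2 * g (r - 2 * e j) := by
        simp only [sq, sub_sub, two_mul]

theorem recurrence_pow_two_pow (c : ι → R) (d : ι → ℤ) (g : ℤ → R) (N : ℤ) (D : ℕ)
    (hd : ∀ j, d j ≤ D) (hrec : ∀ r, N ≤ r → g r = ∑ j, c j * g (r - d j)) (i : ℕ) (r : ℤ)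
    (hr : N + D * (2 ^ i - 1) ≤ r) :
    g r = ∑ j, c j ^ 2 ^ i * g (r - d j * 2 ^ i) := by
  induction i generalizing r with
  | zero => simpa using hrec r (by simpa using hr)
  | succ i ih =>
    have h2i : (0 : ℤ) ≤ 2 ^ i := by positivity
    have hpow : (2 : ℤ) ^ (i + 1) = 2 * 2 ^ i := pow_succ' 2 i
    rw [hpow] at hr
    have hr' : ∀ j, N + D * (2 ^ i - 1) + d j * 2 ^ i ≤ r := fun j => by
      nlinarith [mul_le_mul_of_nonneg_right (hd j) h2i]
    rw [recurrence_sq _ _ g _ ih r (by nlinarith) hr']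
    simp only [← pow_mul, ← pow_succ, hpow, mul_left_comm]

end CharTwo

theorem stmt_2_general (k : ℕ)
    (g : ℤ → MvPolynomial (Fin (k - 1)) (ZMod 2))
    (hrec : ∀ r : ℤ, 1 ≤ r →
      g r = ∑ j : Fin (k - 1), X j * g (r - ((j : ℤ) + 2))) :
    ∀ (i : ℕ) (r : ℤ), 1 + (k : ℤ) * (2 ^ i - 1) ≤ r →
      g r = ∑ j : Fin (k - 1), (X j) ^ (2 ^ i) * g (r - ((j : ℤ) + 2) * 2 ^ i) :=
  CharTwo.recurrence_pow_two_pow X (fun j : Fin (k - 1) => (j : ℤ) + 2) g 1 k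
    (fun j => by have := j.isLt; omega) hrec

/-- For `k ≥ 2`, with `g_r ∈ ℤ₂[w₂,…,w_k]` (variable `X j` is `w_{j+2}`)
defined by `g₀ = 1`, `g_{-1} = ⋯ = g_{-k+1} = 0` and
`g_r = w₂ g_{r-2} + ⋯ + w_k g_{r-k}` for `r ≥ 1`, we have, for every `i ≥ 0` and
every `r ≥ 1 + k(2^i - 1)`, `g_r = ∑_{j=2}^{k} w_j^{2^i} g_{r - j·2^i}`. -/
theorem stmt_2 (k : ℕ) (hk : 2 ≤ k)
    (g : ℤ → MvPolynomial (Fin (k - 1)) (ZMod 2))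
    (hneg : ∀ r : ℤ, -((k : ℤ) - 1) ≤ r → r < 0 → g r = 0)
    (h0 : g 0 = 1)
    (hrec : ∀ r : ℤ, 1 ≤ r →
      g r = ∑ j : Fin (k - 1), X j * g (r - ((j : ℤ) + 2))) :
    ∀ (i : ℕ) (r : ℤ), 1 + (k : ℤ) * (2 ^ i - 1) ≤ r →
      g r = ∑ j : Fin (k - 1), (X j) ^ (2 ^ i) * g (r - ((j : ℤ) + 2) * 2 ^ i) :=
  stmt_2_general k g hrec
end

section
/- Let $g_r \in \mathbb{Z}_2[w_2,w_3,w_4]$ be defined by $g_0=1$, $g_{-1}=g_{-2}=g_{-3}=0$, and $g_r = w_2 g_{r-2} + w_3 g_{r-3} + w_4 g_{r-4}$ for $r\geq 1$. Then for all integers $r \geq -3$ and all $i\geq 0$, $w_3^{2^i-1} g_r^{2^i} = g_{2^i(r+3)-3}$. -/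
/-!
With `s n = g (n - 3)`, the sequence `s` is the solution `0, 0, 0, 1, …` of the linear recurrence
with characteristic polynomial `D(t) = t⁴ + w₂ t² + w₃ t + w₄`. Over `ℤ/2` we have
`D(t)² = t⁸ + w₂² t⁴ + w₃² t² + w₄²`, so both `n ↦ s (2 n)` and `n ↦ w₃ (s n)²` solve the
recurrence with squared coefficients; they share the initial terms `0, 0, 0, w₃`, hence
`s (2 n) = w₃ (s n)²`, and iterating this doubling gives the claim.
-/

open MvPolynomial

def QuarticRec {R : Type*} [CommRing R] (a b c : R) (u : ℕ → R) : Prop :=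
  ∀ n, u (n + 4) = a * u (n + 2) + b * u (n + 1) + c * u n

namespace QuarticRec

variable {R : Type*} [CommRing R] {a b c : R} {u v : ℕ → R}

theorem ext (hu : QuarticRec a b c u) (hv : QuarticRec a b c v) (h0 : u 0 = v 0)
    (h1 : u 1 = v 1) (h2 : u 2 = v 2) (h3 : u 3 = v 3) : u = v := by
  funext n
  induction n using Nat.strong_induction_on with
  | _ n ih =>
    match n with
    | 0 => exact h0
    | 1 => exact h1
    | 2 => exact h2
    | 3 => exact h3
    | m + 4 => rw [hu, hv, ih m (by omega), ih (m + 1) (by omega), ih (m + 2) (by omega)]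

theorem const_mul (hu : QuarticRec a b c u) (k : R) : QuarticRec a b c (fun n ↦ k * u n) := by
  intro n
  simp only [hu n]
  ring

section CharTwo

variable [CharP R 2]

theorem sq (hu : QuarticRec a b c u) : QuarticRec (a ^ 2) (b ^ 2) (c ^ 2) (fun n ↦ u n ^ 2) := by
  intro n
  simp only [hu n, CharTwo.add_sq, mul_pow]

theorem comp_two_mul (hu : QuarticRec a b c u) :
    QuarticRec (a ^ 2) (b ^ 2) (c ^ 2) (fun n ↦ u (2 * n)) := by
  intro n
  have e8 := hu (2 * n + 4)
  have e6 := hu (2 * n + 2)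
  have e5 := hu (2 * n + 1)
  have e4 := hu (2 * n)
  simp only [show 2 * (n + 4) = 2 * n + 4 + 4 by ring, show 2 * (n + 2) = 2 * n + 4 by ring,
    show 2 * (n + 1) = 2 * n + 2 by ring] at e8 e6 e5 e4 ⊢
  linear_combination e8 + a * e6 + b * e5 + c * e4 + CharTwo.two_eq_zero (R := R) *
    (a * b * u (2 * n + 3) + a * c * u (2 * n + 2) + b * c * u (2 * n + 1))

theorem two_mul_eq (hu : QuarticRec a b c u) (h0 : u 0 = 0) (h1 : u 1 = 0) (h2 : u 2 = 0)
    (h3 : u 3 = 1) (n : ℕ) : u (2 * n) = b * u n ^ 2 := by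
  have h4 : u 4 = 0 := by simp [hu 0, h0, h1, h2]
  have h6 : u 6 = b := by simp [hu 2, h2, h3, h4]
  have heq := ext hu.comp_two_mul (hu.sq.const_mul b) (by simp [h0]) (by simp [h1, h2])
    (by simp [h2, h4]) (by simp [h3, h6])
  exact congrFun heq n

end CharTwo

end QuarticRec

theorem apply_two_pow_mul_of_apply_two_mul {M : Type*} [CommMonoid M] {f : ℕ → M} {b : M}
    (hf : ∀ n, f (2 * n) = b * f n ^ 2) (i n : ℕ) :
    f (2 ^ i * n) = b ^ (2 ^ i - 1) * f n ^ 2 ^ i := by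
  induction i with
  | zero => simp
  | succ i ih =>
    have hexp : 2 ^ (i + 1) - 1 = 1 + 2 * (2 ^ i - 1) := by
      have hpos := Nat.one_le_two_pow (n := i)
      rw [pow_succ]
      omega
    rw [hexp, pow_succ', mul_assoc, hf, ih, pow_add, pow_one, pow_mul', pow_mul', mul_pow, mul_assoc]

/-- In `ℤ₂[w₂,w₃,w₄]` (with `X 0 = w₂`, `X 1 = w₃`, `X 2 = w₄`), with
`g₀ = 1`, `g_{-1} = g_{-2} = g_{-3} = 0` and `g_r = w₂ g_{r-2} + w₃ g_{r-3} + w₄ g_{r-4}`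
for `r ≥ 1`, we have `w₃^{2^i - 1} g_r^{2^i} = g_{2^i(r+3)-3}` for all `r ≥ -3`, `i ≥ 0`. -/
theorem stmt_3 (g : ℤ → MvPolynomial (Fin 3) (ZMod 2))
    (hneg : ∀ r : ℤ, -3 ≤ r → r < 0 → g r = 0)
    (h0 : g 0 = 1)
    (hrec : ∀ r : ℤ, 1 ≤ r →
      g r = X 0 * g (r - 2) + X 1 * g (r - 3) + X 2 * g (r - 4)) :
    ∀ (r : ℤ), -3 ≤ r → ∀ (i : ℕ),
      (X 1 : MvPolynomial (Fin 3) (ZMod 2)) ^ (2 ^ i - 1) * (g r) ^ (2 ^ i) =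
        g (2 ^ i * (r + 3) - 3) := by
  have hsrec : QuarticRec (X 0) (X 1) (X 2) (fun n : ℕ ↦ g (n - 3)) := fun n ↦ by
    push_cast
    rw [show (n : ℤ) + 4 - 3 = n + 1 by ring, hrec _ (by omega)]
    ring_nf
  have hdouble := hsrec.two_mul_eq (hneg _ (by norm_num) (by norm_num))
    (hneg _ (by norm_num) (by norm_num)) (hneg _ (by norm_num) (by norm_num)) (by simpa using h0)
  intro r hr i
  obtain ⟨n, rfl⟩ : ∃ n : ℕ, r = n - 3 := ⟨(r + 3).toNat, by omega⟩
  have hiter := apply_two_pow_mul_of_apply_two_mul (f := fun n : ℕ ↦ g (n - 3)) hdouble i n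
  push_cast at hiter
  rw [← hiter, sub_add_cancel]
end

section
/- Let $g_r \in \mathbb{Z}_2[w_2,w_3,w_4]$ be defined by $g_0=1$, $g_{-1}=g_{-2}=g_{-3}=0$, and $g_r = w_2 g_{r-2} + w_3 g_{r-3} + w_4 g_{r-4}$ for $r\geq 1$. Then $w_3 g_r^2 = g_{2r+3}$ for all $r\geq -3$. -/
open MvPolynomial

/-!
In characteristic 2 squaring is additive, so squaring the recurrence gives
`b g_r² = a² (b g_{r-2}²) + b² (b g_{r-3}²) + c² (b g_{r-4}²)`, and by induction the right-hand
side is `a² g_{2r-1} + b² g_{2r-3} + c² g_{2r-5}`. This is `g_{2r+3}`, because in characteristic 2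
the square `x⁸ + a² x⁴ + b² x² + c²` of the characteristic polynomial `x⁴ + a x² + b x + c` gives
a recurrence satisfied by every solution of the original one.
-/

section CharTwo

variable {R : Type*} [CommRing R] [CharP R 2] {a b c : R} {g : ℤ → R}

theorem recurrence_sq_of_charTwo {m : ℤ}
    (hrec : ∀ n, m ≤ n → g n = a * g (n - 2) + b * g (n - 3) + c * g (n - 4))
    {n : ℤ} (hn : m + 4 ≤ n) :
    g n = a ^ 2 * g (n - 4) + b ^ 2 * g (n - 6) + c ^ 2 * g (n - 8) := by
  have e0 := hrec n (by omega)
  have e2 := hrec (n - 2) (by omega)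
  have e3 := hrec (n - 3) (by omega)
  have e4 := hrec (n - 4) (by omega)
  linear_combination (norm := ring_nf) e0 + a * e2 + b * e3 + c * e4
    + (a * b * g (n - 5) + a * c * g (n - 6) + b * c * g (n - 7)) * CharTwo.two_eq_zero (R := R)

theorem mul_sq_eq_of_charTwo (hneg : ∀ r : ℤ, -3 ≤ r → r < 0 → g r = 0) (h0 : g 0 = 1)
    (hrec : ∀ r : ℤ, 1 ≤ r → g r = a * g (r - 2) + b * g (r - 3) + c * g (r - 4))
    (r : ℤ) (hr : -3 ≤ r) : b * g r ^ 2 = g (2 * r + 3) := by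
  induction r using Int.strongRec (m := 1) with
  | lt r hr1 =>
    have g1 : g 1 = 0 := by simpa [hneg] using hrec 1 le_rfl
    have g3 : g 3 = b := by simpa [hneg, g1, h0] using hrec 3 (by norm_num)
    obtain rfl | rfl | rfl | rfl : r = -3 ∨ r = -2 ∨ r = -1 ∨ r = 0 := by omega
    all_goals norm_num [hneg, g1, g3, h0]
  | ge r hr1 ih =>
    have ih' : ∀ k, 2 ≤ k → k ≤ 4 → b * g (r - k) ^ 2 = g (2 * r + 3 - 2 * k) := by
      intro k hk2 hk4
      rw [ih (r - k) (by omega) (by omega)]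
      ring_nf
    calc b * g r ^ 2
        = a ^ 2 * (b * g (r - 2) ^ 2) + b ^ 2 * (b * g (r - 3) ^ 2)
            + c ^ 2 * (b * g (r - 4) ^ 2) := by
          rw [hrec r hr1, CharTwo.add_sq, CharTwo.add_sq]; ring
      _ = a ^ 2 * g (2 * r + 3 - 4) + b ^ 2 * g (2 * r + 3 - 6)
            + c ^ 2 * g (2 * r + 3 - 8) := by
          rw [ih' 2 le_rfl (by norm_num), ih' 3 (by norm_num) (by norm_num),
            ih' 4 (by norm_num) le_rfl]
          norm_num
      _ = g (2 * r + 3) := (recurrence_sq_of_charTwo hrec (by omega)).symm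

end CharTwo

/-- In `ℤ₂[w₂,w₃,w₄]` (with `X 0 = w₂`, `X 1 = w₃`, `X 2 = w₄`), with the
sequence `g_r` defined by `g₀ = 1`, `g_{-1} = g_{-2} = g_{-3} = 0` and
`g_r = w₂ g_{r-2} + w₃ g_{r-3} + w₄ g_{r-4}` for `r ≥ 1`, we have
`w₃ g_r² = g_{2r+3}` for all `r ≥ -3`. -/
theorem stmt_4 (g : ℤ → MvPolynomial (Fin 3) (ZMod 2))
    (hneg : ∀ r : ℤ, -3 ≤ r → r < 0 → g r = 0)
    (h0 : g 0 = 1)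
    (hrec : ∀ r : ℤ, 1 ≤ r →
      g r = X 0 * g (r - 2) + X 1 * g (r - 3) + X 2 * g (r - 4)) :
    ∀ (r : ℤ), -3 ≤ r →
      (X 1 : MvPolynomial (Fin 3) (ZMod 2)) * (g r) ^ 2 = g (2 * r + 3) :=
  mul_sq_eq_of_charTwo hneg h0 hrec
end

section
/- Let $g_r \in \mathbb{Z}_2[w_2,w_3,w_4]$ be defined by $g_0=1$, $g_{-1}=g_{-2}=g_{-3}=0$, and $g_r = w_2 g_{r-2} + w_3 g_{r-3} + w_4 g_{r-4}$ for $r\geq 1$. Then for every $m\geq 0$, the polynomial $g_{2^m-2}$ contains no monomial divisible by $w_4$; equivalently, $g_{2^m-2} \in \mathbb{Z}_2[w_2,w_3]$. -/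
/-!
In characteristic 2, squaring is additive, so with `P(t) = 1 + a t² + b t³ + c t⁴` and
`G = P⁻¹ = ∑ gᵣ tʳ` we have `G = P / P² = P(t) · ∑ gₙ² t²ⁿ`. Comparing coefficients gives
`g₂ₙ = gₙ² + a gₙ₋₁² + c gₙ₋₂²` and `g₂ₙ₊₁ = b gₙ₋₁²`. The odd formula forces `g_{2ᵏ-3} = 0`, so
the `c`-term drops out of `g_{2ᵏ⁺²-2} = b² g_{2ᵏ-2}⁴ + a g_{2ᵏ⁺¹-2}²`, and by induction every
`g_{2ᵐ-2}` is a polynomial in `a` and `b` alone.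
-/

open MvPolynomial

theorem MvPolynomial.apply_eq_zero_of_mem_supported {R σ : Type*} [CommSemiring R]
    {s : Set σ} {p : MvPolynomial σ R} (hp : p ∈ supported R s) {d : σ →₀ ℕ}
    (hd : d ∈ p.support) {i : σ} (hi : i ∉ s) : d i = 0 := by
  by_contra h
  exact hi <| mem_supported.1 hp <|
    (mem_vars_iff_mem_support i).2 ⟨d, hd, Finsupp.mem_support_iff.2 h⟩

variable {R : Type*} [CommRing R] {a b c : R} {g : ℤ → R}

/-- `g r` is the coefficient of `tʳ` in `(1 + a t² + b t³ + c t⁴)⁻¹`. -/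
structure IsInvSeries (a b c : R) (g : ℤ → R) : Prop where
  eq_zero_of_neg : ∀ r : ℤ, -3 ≤ r → r < 0 → g r = 0
  eq_one : g 0 = 1
  recurrence : ∀ r : ℤ, 1 ≤ r → g r = a * g (r - 2) + b * g (r - 3) + c * g (r - 4)

def Doubles (a b c : R) (g : ℤ → R) (n : ℤ) : Prop :=
  g (2 * n) = g n ^ 2 + a * g (n - 1) ^ 2 + c * g (n - 2) ^ 2 ∧
    g (2 * n + 1) = b * g (n - 1) ^ 2

namespace IsInvSeries

theorem doubles_neg_one (hg : IsInvSeries a b c g) : Doubles a b c g (-1) := by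
  have h₁ := hg.eq_zero_of_neg (-1) (by norm_num) (by norm_num)
  have h₂ := hg.eq_zero_of_neg (-2) (by norm_num) (by norm_num)
  have h₃ := hg.eq_zero_of_neg (-3) (by norm_num) (by norm_num)
  constructor <;> norm_num [h₁, h₂, h₃]

theorem doubles_zero (hg : IsInvSeries a b c g) : Doubles a b c g 0 := by
  have h₁ := hg.eq_zero_of_neg (-1) (by norm_num) (by norm_num)
  have h₂ := hg.eq_zero_of_neg (-2) (by norm_num) (by norm_num)
  have h₃ := hg.eq_zero_of_neg (-3) (by norm_num) (by norm_num)
  have hr := hg.recurrence 1 le_rfl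
  constructor
  · norm_num [hg.eq_one, h₁, h₂]
  · norm_num [hr, h₁, h₂, h₃]

theorem doubles_add_two [CharP R 2] (hg : IsInvSeries a b c g) {n : ℤ} (hn : -1 ≤ n)
    (h₀ : Doubles a b c g n) (h₁ : Doubles a b c g (n + 1)) : Doubles a b c g (n + 2) := by
  obtain ⟨hE₀, hO₀⟩ := h₀
  obtain ⟨hE₁, hO₁⟩ := h₁
  have hr := hg.recurrence (n + 2) (by omega)
  have hr_even := hg.recurrence (2 * (n + 2)) (by omega)
  have hr_odd := hg.recurrence (2 * (n + 2) + 1) (by omega)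
  constructor
  · linear_combination (norm := ring_nf) hr_even + a * hE₁ + b * hO₀ + c * hE₀
      - (g (n + 2) + a * g n + b * g (n - 1) + c * g (n - 2)) * hr
    -- what is left are cross terms with coefficient `2`
    simp [CharTwo.two_eq_zero]
  · linear_combination (norm := ring_nf) hr_odd + a * hO₁ + b * hE₁ + c * hO₀
    simp [CharTwo.two_eq_zero]

theorem doubles [CharP R 2] (hg : IsInvSeries a b c g) {n : ℤ} (hn : -1 ≤ n) :
    Doubles a b c g n := by
  suffices Doubles a b c g n ∧ Doubles a b c g (n + 1) from this.1
  induction n, hn using Int.leInduction with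
  | base => exact ⟨hg.doubles_neg_one, hg.doubles_zero⟩
  | succ n hn ih =>
    refine ⟨ih.2, ?_⟩
    rw [add_assoc]
    exact hg.doubles_add_two hn ih.1 ih.2

theorem apply_two_pow_sub_three [CharP R 2] (hg : IsInvSeries a b c g) (k : ℕ) :
    g (2 ^ k - 3) = 0 := by
  induction k with
  | zero => exact hg.eq_zero_of_neg _ (by norm_num) (by norm_num)
  | succ k ih =>
    have h := (hg.doubles (n := 2 ^ k - 2) (by linarith [pow_pos (two_pos (α := ℤ)) k])).2
    rw [show 2 * ((2 : ℤ) ^ k - 2) + 1 = 2 ^ (k + 1) - 3 by ring,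
      show (2 : ℤ) ^ k - 2 - 1 = 2 ^ k - 3 by ring, ih] at h
    simpa using h

theorem apply_two_pow_add_two_sub_two [CharP R 2] (hg : IsInvSeries a b c g) (k : ℕ) :
    g (2 ^ (k + 2) - 2) = b ^ 2 * g (2 ^ k - 2) ^ 4 + a * g (2 ^ (k + 1) - 2) ^ 2 := by
  have hk : (1 : ℤ) ≤ 2 ^ k := one_le_pow₀ one_le_two
  have hO := (hg.doubles (n := 2 ^ k - 1) (by linarith)).2
  have hE := (hg.doubles (n := 2 ^ (k + 1) - 1) (by linarith [pow_succ (2 : ℤ) k])).1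
  rw [show 2 * ((2 : ℤ) ^ k - 1) + 1 = 2 ^ (k + 1) - 1 by ring,
    show (2 : ℤ) ^ k - 1 - 1 = 2 ^ k - 2 by ring] at hO
  rw [show 2 * ((2 : ℤ) ^ (k + 1) - 1) = 2 ^ (k + 2) - 2 by ring,
    show (2 : ℤ) ^ (k + 1) - 1 - 1 = 2 ^ (k + 1) - 2 by ring,
    show (2 : ℤ) ^ (k + 1) - 1 - 2 = 2 ^ (k + 1) - 3 by ring,
    hg.apply_two_pow_sub_three, hO] at hE
  linear_combination hE

theorem apply_two_pow_sub_two_mem [CharP R 2] {S : Type*} [SetLike S R] [SubsemiringClass S R]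
    {s : S} (hg : IsInvSeries a b c g) (ha : a ∈ s) (hb : b ∈ s) (m : ℕ) :
    g (2 ^ m - 2) ∈ s := by
  induction m using Nat.twoStepInduction with
  | zero => simp [hg.eq_zero_of_neg (-1) (by norm_num) (by norm_num)]
  | one => simp [hg.eq_one]
  | more k h₀ h₁ =>
    rw [hg.apply_two_pow_add_two_sub_two]
    exact add_mem (mul_mem (pow_mem hb 2) (pow_mem h₀ 4)) (mul_mem ha (pow_mem h₁ 2))

end IsInvSeries

/-- In `ℤ₂[w₂,w₃,w₄]` (with `X 0 = w₂`, `X 1 = w₃`, `X 2 = w₄`), with the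
sequence `g_r` as above, for every `m ≥ 0` the polynomial `g_{2^m - 2}` contains no
monomial divisible by `w₄`, i.e. every exponent vector in its support has `w₄`-exponent
`0` (equivalently `g_{2^m-2} ∈ ℤ₂[w₂,w₃]`). -/
theorem stmt_5 (g : ℤ → MvPolynomial (Fin 3) (ZMod 2))
    (hneg : ∀ r : ℤ, -3 ≤ r → r < 0 → g r = 0)
    (h0 : g 0 = 1)
    (hrec : ∀ r : ℤ, 1 ≤ r →
      g r = X 0 * g (r - 2) + X 1 * g (r - 3) + X 2 * g (r - 4)) :
    ∀ m : ℕ, ∀ d ∈ (g ((2 : ℤ) ^ m - 2)).support, d 2 = 0 := by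
  intro m d hd
  have hg : IsInvSeries (X 0) (X 1) (X 2) g := ⟨hneg, h0, hrec⟩
  have hmem : g (2 ^ m - 2) ∈ supported (ZMod 2) ({0, 1} : Set (Fin 3)) :=
    hg.apply_two_pow_sub_two_mem (X_mem_supported.2 (by simp)) (X_mem_supported.2 (by simp)) m
  exact apply_eq_zero_of_mem_supported hmem hd (by decide)
end

section
/- Let $t\geq 3$ and let $g_r \in \mathbb{Z}_2[w_2,w_3,w_4]$ satisfy $g_0=1$, $g_{-1}=g_{-2}=g_{-3}=0$, $g_r = w_2 g_{r-2} + w_3 g_{r-3} + w_4 g_{r-4}$ for $r\geq 1$. Then for every $i$ with $0\leq i\leq t-1$, the polynomial $g_{2^t-3+2^i}$ contains no monomial involving $w_4$. -/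
/-!
In characteristic 2 the sequence satisfies the doubling formulas
`g (2k) = g k ^ 2 + a g (k-1) ^ 2 + c g (k-2) ^ 2` and `g (2k+1) = b g (k-1) ^ 2`
(the even and odd parts of `1 / (1 + a x² + b x³ + c x⁴)`, computed with the Frobenius).
The odd formula gives `g (2^k - 3) = 0` for all `k`, which kills the `c`-term of the even
formula for `g (2^s - 2)`; hence these values lie in the subsemiring generated by `a` and `b`.
Since `2^t + 2^i - 3 = 2 (2^(t-1) + 2^(i-1) - 2) + 1`, the odd formula reduces every
`g (2^t + 2^i - 3)` to `b` times the square of one with smaller exponents, until one exponent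
is `0` and the index is `2^s - 2`.
-/

open MvPolynomial

variable {R : Type*} [CommRing R]

/-- `g` is the coefficient sequence of `1 / (1 + a x² + b x³ + c x⁴)`, extended by zeros
to `r ∈ {-3, -2, -1}`. -/
structure IsInvCoeffSeq (a b c : R) (g : ℤ → R) : Prop where
  eq_zero_of_neg : ∀ r : ℤ, -3 ≤ r → r < 0 → g r = 0
  zero : g 0 = 1
  recurrence : ∀ r : ℤ, 1 ≤ r → g r = a * g (r - 2) + b * g (r - 3) + c * g (r - 4)

def DoublingAt (a b c : R) (g : ℤ → R) (k : ℤ) : Prop :=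
  g (2 * k) = g k ^ 2 + a * g (k - 1) ^ 2 + c * g (k - 2) ^ 2 ∧
    g (2 * k + 1) = b * g (k - 1) ^ 2

namespace IsInvCoeffSeq

variable {a b c : R} {g : ℤ → R}

theorem one (hg : IsInvCoeffSeq a b c g) : g 1 = 0 := by
  rw [hg.recurrence 1 le_rfl]
  norm_num [hg.eq_zero_of_neg]

theorem doublingAt_neg_one (hg : IsInvCoeffSeq a b c g) : DoublingAt a b c g (-1) := by
  norm_num [DoublingAt, hg.eq_zero_of_neg]

theorem doublingAt_zero (hg : IsInvCoeffSeq a b c g) : DoublingAt a b c g 0 := by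
  norm_num [DoublingAt, hg.eq_zero_of_neg, hg.zero, hg.one]

variable [CharP R 2]

theorem doublingAt_of_pred (hg : IsInvCoeffSeq a b c g) {k : ℤ} (hk : 1 ≤ k)
    (h₂ : DoublingAt a b c g (k - 2)) (h₁ : DoublingAt a b c g (k - 1)) :
    DoublingAt a b c g k := by
  have two : (2 : R) = 0 := CharTwo.two_eq_zero
  obtain ⟨hE₁, hO₁⟩ := h₁
  obtain ⟨hE₂, hO₂⟩ := h₂
  have hrk := hg.recurrence k hk
  have hE := hg.recurrence (2 * k) (by omega)
  have hO := hg.recurrence (2 * k + 1) (by omega)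
  rw [show 2 * (k - 1) = 2 * k - 2 by ring, show k - 1 - 1 = k - 2 by ring,
    show k - 1 - 2 = k - 3 by ring] at hE₁
  rw [show 2 * (k - 1) + 1 = 2 * k + 1 - 2 by ring, show k - 1 - 1 = k - 2 by ring] at hO₁
  rw [show 2 * (k - 2) = 2 * k - 4 by ring, show k - 2 - 1 = k - 3 by ring,
    show k - 2 - 2 = k - 4 by ring] at hE₂
  rw [show 2 * (k - 2) + 1 = 2 * k - 3 by ring, show k - 2 - 1 = k - 3 by ring] at hO₂
  rw [show 2 * k + 1 - 3 = 2 * k - 2 by ring, show 2 * k + 1 - 4 = 2 * k - 3 by ring] at hO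
  constructor
  · linear_combination hE + a * hE₁ + b * hO₂ + c * hE₂
      - (g k + a * g (k - 2) + b * g (k - 3) + c * g (k - 4)) * hrk
      + (a * c * g (k - 3) ^ 2 - a * b * g (k - 2) * g (k - 3)
        - a * c * g (k - 2) * g (k - 4) - b * c * g (k - 3) * g (k - 4)) * two
  · linear_combination hO + a * hO₁ + b * hE₁ + c * hO₂
      + (a * b * g (k - 2) ^ 2 + b * c * g (k - 3) ^ 2) * two

theorem doublingAt (hg : IsInvCoeffSeq a b c g) {k : ℤ} (hk : -1 ≤ k) :
    DoublingAt a b c g k := by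
  obtain ⟨n, rfl⟩ : ∃ n : ℕ, k = n - 1 := ⟨(k + 1).toNat, by omega⟩
  induction n using Nat.twoStepInduction with
  | zero => simpa using hg.doublingAt_neg_one
  | one => simpa using hg.doublingAt_zero
  | more n h₂ h₁ =>
    refine hg.doublingAt_of_pred (by omega) ?_ ?_
    · convert h₂ (by omega) using 1
      push_cast; ring
    · convert h₁ (by omega) using 1
      push_cast; ring

theorem two_pow_sub_three (hg : IsInvCoeffSeq a b c g) (k : ℕ) : g (2 ^ k - 3) = 0 := by
  induction k with
  | zero => exact hg.eq_zero_of_neg _ (by norm_num) (by norm_num)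
  | succ k ih =>
    have hk : (1 : ℤ) ≤ 2 ^ k := one_le_pow₀ (by norm_num)
    have h := (hg.doublingAt (k := 2 ^ k - 2) (by omega)).2
    rw [show 2 * ((2 : ℤ) ^ k - 2) + 1 = 2 ^ (k + 1) - 3 by ring,
      show (2 : ℤ) ^ k - 2 - 1 = 2 ^ k - 3 by ring, ih] at h
    simpa using h

variable {S : Subsemiring R}

theorem two_pow_sub_two_mem (hg : IsInvCoeffSeq a b c g) (ha : a ∈ S) (hb : b ∈ S) (s : ℕ) :
    g (2 ^ s - 2) ∈ S := by
  induction s using Nat.twoStepInduction with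
  | zero => simp [hg.eq_zero_of_neg (-1) (by norm_num) (by norm_num), zero_mem]
  | one => simp [hg.zero, one_mem]
  | more s h₂ h₁ =>
    have hs : (1 : ℤ) ≤ 2 ^ s := one_le_pow₀ (by norm_num)
    have hE := (hg.doublingAt (k := 2 ^ (s + 1) - 1) (by omega)).1
    have hO := (hg.doublingAt (k := 2 ^ s - 1) (by omega)).2
    rw [show 2 * ((2 : ℤ) ^ (s + 1) - 1) = 2 ^ (s + 2) - 2 by ring,
      show (2 : ℤ) ^ (s + 1) - 1 - 1 = 2 ^ (s + 1) - 2 by ring,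
      show (2 : ℤ) ^ (s + 1) - 1 - 2 = 2 ^ (s + 1) - 3 by ring,
      hg.two_pow_sub_three] at hE
    rw [show 2 * ((2 : ℤ) ^ s - 1) + 1 = 2 ^ (s + 1) - 1 by ring,
      show (2 : ℤ) ^ s - 1 - 1 = 2 ^ s - 2 by ring] at hO
    rw [hE, hO]
    simpa using add_mem (pow_mem (mul_mem hb (pow_mem h₂ 2)) 2) (mul_mem ha (pow_mem h₁ 2))

theorem two_pow_add_two_pow_sub_three_mem (hg : IsInvCoeffSeq a b c g) (ha : a ∈ S)
    (hb : b ∈ S) (t i : ℕ) : g (2 ^ t + 2 ^ i - 3) ∈ S := by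
  induction t generalizing i with
  | zero =>
    rw [show (2 : ℤ) ^ 0 + 2 ^ i - 3 = 2 ^ i - 2 by ring]
    exact hg.two_pow_sub_two_mem ha hb i
  | succ t ih =>
    cases i with
    | zero =>
      rw [show (2 : ℤ) ^ (t + 1) + 2 ^ 0 - 3 = 2 ^ (t + 1) - 2 by ring]
      exact hg.two_pow_sub_two_mem ha hb (t + 1)
    | succ i =>
      have ht : (1 : ℤ) ≤ 2 ^ t := one_le_pow₀ (by norm_num)
      have hi : (1 : ℤ) ≤ 2 ^ i := one_le_pow₀ (by norm_num)
      have h := (hg.doublingAt (k := 2 ^ t + 2 ^ i - 2) (by omega)).2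
      rw [show 2 * ((2 : ℤ) ^ t + 2 ^ i - 2) + 1 = 2 ^ (t + 1) + 2 ^ (i + 1) - 3 by ring,
        show (2 : ℤ) ^ t + 2 ^ i - 2 - 1 = 2 ^ t + 2 ^ i - 3 by ring] at h
      rw [h]
      exact mul_mem hb (pow_mem (ih i) 2)

end IsInvCoeffSeq

theorem MvPolynomial.eq_zero_of_mem_supported {σ K : Type*} [CommSemiring K] {s : Set σ}
    {p : MvPolynomial σ K} (hp : p ∈ supported K s) {d : σ →₀ ℕ} (hd : d ∈ p.support)
    {j : σ} (hj : j ∉ s) : d j = 0 := by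
  by_contra hdj
  exact hj (mem_supported.mp hp ((mem_vars_iff_mem_support j).mpr ⟨d, hd, Finsupp.mem_support_iff.mpr hdj⟩))

theorem stmt_6_general (t : ℕ)
    (g : ℤ → MvPolynomial (Fin 3) (ZMod 2))
    (hneg : ∀ r : ℤ, -3 ≤ r → r < 0 → g r = 0)
    (h0 : g 0 = 1)
    (hrec : ∀ r : ℤ, 1 ≤ r →
      g r = X 0 * g (r - 2) + X 1 * g (r - 3) + X 2 * g (r - 4)) :
    ∀ i : ℕ, i ≤ t - 1 →
      ∀ d ∈ (g ((2 : ℤ) ^ t - 3 + 2 ^ i)).support, d 2 = 0 := by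
  intro i _ d hd
  have hg : IsInvCoeffSeq (X 0) (X 1) (X 2) g := ⟨hneg, h0, hrec⟩
  have hmem := hg.two_pow_add_two_pow_sub_three_mem
    (S := (supported (ZMod 2) ({0, 1} : Set (Fin 3))).toSubsemiring)
    (X_mem_supported.mpr (by simp)) (X_mem_supported.mpr (by simp)) t i
  rw [show (2 : ℤ) ^ t + 2 ^ i - 3 = 2 ^ t - 3 + 2 ^ i by ring] at hmem
  exact eq_zero_of_mem_supported hmem hd (by decide)

/-- For `t ≥ 3` and `0 ≤ i ≤ t-1`, the polynomial `g_{2^t - 3 + 2^i}`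
(in `ℤ₂[w₂,w₃,w₄]`, with `X 0 = w₂`, `X 1 = w₃`, `X 2 = w₄`) contains no monomial
involving `w₄`. -/
theorem stmt_6 (t : ℕ) (ht : 3 ≤ t)
    (g : ℤ → MvPolynomial (Fin 3) (ZMod 2))
    (hneg : ∀ r : ℤ, -3 ≤ r → r < 0 → g r = 0)
    (h0 : g 0 = 1)
    (hrec : ∀ r : ℤ, 1 ≤ r →
      g r = X 0 * g (r - 2) + X 1 * g (r - 3) + X 2 * g (r - 4)) :
    ∀ i : ℕ, i ≤ t - 1 →
      ∀ d ∈ (g ((2 : ℤ) ^ t - 3 + 2 ^ i)).support, d 2 = 0 :=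
  stmt_6_general t g hneg h0 hrec
end

section
/- Let $g_r \in \mathbb{Z}_2[w_2,w_3,w_4]$ satisfy $g_0=1$, $g_{-1}=g_{-2}=g_{-3}=0$, $g_r = w_2 g_{r-2} + w_3 g_{r-3} + w_4 g_{r-4}$ for $r\geq 1$. Then for every $t\geq 2$, $g_{2^t-3}=0$. -/
/-!
Let `G(x) = ∑ g_r x^r` and `P(x) = 1 + w₂x² + w₃x³ + w₄x⁴`, so that `G P = 1`. Then
`G = P G²`, and in characteristic 2 squaring is additive, so `G(x)² = ∑ g_k² x^{2k}`.
Coefficientwise: the coefficients of `P G²` satisfy the recurrence and initial values of `g`,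
hence equal `g`. Comparing odd coefficients gives `g_{2k+1} = w₃ g_{k-1}²`, and since
`2^{t+1} - 3 = 2(2^t - 2) + 1`, the vanishing of `g_{2^t-3}` propagates from `g_{-2} = 0`.
-/

open MvPolynomial

namespace QuarticRecurrence

variable {R : Type*} [CommRing R]

def Solves (a b c : R) (g : ℤ → R) : Prop :=
  ∀ r : ℤ, 1 ≤ r → g r = a * g (r - 2) + b * g (r - 3) + c * g (r - 4)

theorem Solves.eq_of_eq_initial {a b c : R} {f g : ℤ → R} (hf : Solves a b c f)
    (hg : Solves a b c g) (hinit : ∀ r : ℤ, -3 ≤ r → r ≤ 0 → f r = g r) :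
    ∀ r : ℤ, -3 ≤ r → f r = g r := by
  suffices h : ∀ n : ℤ, 0 ≤ n → ∀ r : ℤ, -3 ≤ r → r ≤ n → f r = g r from
    fun r hr => h (max r 0) (le_max_right r 0) r hr (le_max_left r 0)
  intro n hn
  induction n, hn using Int.leInduction with
  | base => exact hinit
  | succ n hn ih =>
    intro r hr hrn
    rcases lt_or_eq_of_le hrn with hlt | rfl
    · exact ih r hr (by omega)
    · rw [hf _ (by omega), hg _ (by omega), ih (n + 1 - 2) (by omega) (by omega),
        ih (n + 1 - 3) (by omega) (by omega), ih (n + 1 - 4) (by omega) (by omega)]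

/-- The coefficient of `x^r` in `P(x) · ∑ g_k² x^{2k}`, where
`P(x) = 1 + a x² + b x³ + c x⁴`. For odd `r`, `r / 2` is `(r - 1) / 2` (floor division). -/
def frobeniusTwist (a b c : R) (g : ℤ → R) (r : ℤ) : R :=
  if Even r then g (r / 2) ^ 2 + a * g (r / 2 - 1) ^ 2 + c * g (r / 2 - 2) ^ 2
  else b * g (r / 2 - 1) ^ 2

variable {a b c : R} {g : ℤ → R}

theorem frobeniusTwist_two_mul (k : ℤ) :
    frobeniusTwist a b c g (2 * k) = g k ^ 2 + a * g (k - 1) ^ 2 + c * g (k - 2) ^ 2 := by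
  simp [frobeniusTwist]

theorem frobeniusTwist_two_mul_add_one (k : ℤ) :
    frobeniusTwist a b c g (2 * k + 1) = b * g (k - 1) ^ 2 := by
  have hk : (2 * k + 1) / 2 = k := by omega
  simp [frobeniusTwist, hk]

variable [CharP R 2]

theorem solves_frobeniusTwist (hg : Solves a b c g) : Solves a b c (frobeniusTwist a b c g) := by
  intro r hr
  obtain ⟨k, rfl | rfl⟩ := Int.even_or_odd' r
  · have hk := hg k (by omega)
    rw [show 2 * k - 2 = 2 * (k - 1) by ring, show 2 * k - 3 = 2 * (k - 2) + 1 by ring,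
      show 2 * k - 4 = 2 * (k - 2) by ring]
    simp only [frobeniusTwist_two_mul, frobeniusTwist_two_mul_add_one, sub_sub]
    norm_num only
    -- the square of the recurrence at `k`, squaring being additive in characteristic 2
    linear_combination (g k + a * g (k - 2) + b * g (k - 3) + c * g (k - 4)) * hk +
      (a * b * g (k - 2) * g (k - 3) + a * c * g (k - 2) * g (k - 4)
        + b * c * g (k - 3) * g (k - 4) - a * c * g (k - 3) ^ 2) * CharTwo.two_eq_zero (R := R)
  · rw [show 2 * k + 1 - 2 = 2 * (k - 1) + 1 by ring, show 2 * k + 1 - 3 = 2 * (k - 1) by ring,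
      show 2 * k + 1 - 4 = 2 * (k - 2) + 1 by ring]
    simp only [frobeniusTwist_two_mul, frobeniusTwist_two_mul_add_one, sub_sub]
    norm_num only
    linear_combination
      (-(a * b * g (k - 2) ^ 2) - b * c * g (k - 3) ^ 2) * CharTwo.two_eq_zero (R := R)

theorem eq_frobeniusTwist (hg : Solves a b c g) (hneg : ∀ r : ℤ, -3 ≤ r → r < 0 → g r = 0)
    (h0 : g 0 = 1) : ∀ r : ℤ, -3 ≤ r → g r = frobeniusTwist a b c g r := by
  refine hg.eq_of_eq_initial (solves_frobeniusTwist hg) fun r hr hr0 => ?_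
  have hm1 := hneg (-1) (by norm_num) (by norm_num)
  have hm2 := hneg (-2) (by norm_num) (by norm_num)
  have hm3 := hneg (-3) (by norm_num) (by norm_num)
  obtain rfl | rfl | rfl | rfl : r = -3 ∨ r = -2 ∨ r = -1 ∨ r = 0 := by omega
  · rw [show (-3 : ℤ) = 2 * -2 + 1 by norm_num, frobeniusTwist_two_mul_add_one]
    norm_num [hm3]
  · rw [show (-2 : ℤ) = 2 * -1 by norm_num, frobeniusTwist_two_mul]
    norm_num [hm1, hm2, hm3]
  · rw [show (-1 : ℤ) = 2 * -1 + 1 by norm_num, frobeniusTwist_two_mul_add_one]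
    norm_num [hm1, hm2]
  · rw [show (0 : ℤ) = 2 * 0 by norm_num, frobeniusTwist_two_mul]
    norm_num [h0, hm1, hm2]

theorem eq_zero_two_pow_sub_three (hg : Solves a b c g)
    (hneg : ∀ r : ℤ, -3 ≤ r → r < 0 → g r = 0) (h0 : g 0 = 1) (t : ℕ) :
    g (2 ^ t - 3) = 0 := by
  induction t with
  | zero => exact hneg _ (by norm_num) (by norm_num)
  | succ t ih =>
    have ht : (1 : ℤ) ≤ 2 ^ t := one_le_pow₀ (by norm_num)
    rw [show (2 : ℤ) ^ (t + 1) - 3 = 2 * (2 ^ t - 2) + 1 by ring,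
      eq_frobeniusTwist hg hneg h0 _ (by omega), frobeniusTwist_two_mul_add_one,
      show (2 : ℤ) ^ t - 2 - 1 = 2 ^ t - 3 by ring, ih]
    ring

end QuarticRecurrence

/-- In `ℤ₂[w₂,w₃,w₄]` (with `X 0 = w₂`, `X 1 = w₃`, `X 2 = w₄`), with the
sequence `g_r` as above, `g_{2^t - 3} = 0` for every `t ≥ 2`. -/
theorem stmt_7 (g : ℤ → MvPolynomial (Fin 3) (ZMod 2))
    (hneg : ∀ r : ℤ, -3 ≤ r → r < 0 → g r = 0)
    (h0 : g 0 = 1)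
    (hrec : ∀ r : ℤ, 1 ≤ r →
      g r = X 0 * g (r - 2) + X 1 * g (r - 3) + X 2 * g (r - 4)) :
    ∀ t : ℕ, 2 ≤ t → g ((2 : ℤ) ^ t - 3) = 0 :=
  fun t _ => QuarticRecurrence.eq_zero_two_pow_sub_three hrec hneg h0 t
end

section
/- Let $g_r \in \mathbb{Z}_2[w_2,w_3]$ satisfy $g_0=1$, $g_{-1}=g_{-2}=0$, and $g_r = w_2 g_{r-2} + w_3 g_{r-3}$ for $r\geq 1$ (this is the $k=3$ case). Then for every $t\geq 2$, $g_{2^t-3}=0$. -/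
/-!
In characteristic two the recurrence satisfies the doubling formulas
`g (2n) = g n ^ 2 + a * g (n - 1) ^ 2` and `g (2n + 1) = b * g (n - 1) ^ 2`, because squaring is
additive and the cross terms `2 a b (…)` vanish. Since `2 ^ (t + 1) - 3 = 2 (2 ^ t - 2) + 1`, the
odd formula gives `g (2 ^ (t + 1) - 3) = b * g (2 ^ t - 3) ^ 2`, so the vanishing of
`g 1 = g (2 ^ 2 - 3)` propagates to every `t ≥ 2`.
-/

namespace CharTwoRecurrence

variable {R : Type*} [CommRing R] {a b : R} {g : ℤ → R}
  (hrec : ∀ r : ℤ, 1 ≤ r → g r = a * g (r - 2) + b * g (r - 3))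
  (hm2 : g (-2) = 0) (hm1 : g (-1) = 0)
include hrec hm2 hm1

theorem apply_one : g 1 = 0 := by
  rw [hrec 1 le_rfl]
  norm_num [hm1, hm2]

variable [CharP R 2]

theorem apply_two_mul_and_two_mul_add_one (h0 : g 0 = 1) (n : ℤ) (hn : -1 ≤ n) :
    (g (2 * n) = g n ^ 2 + a * g (n - 1) ^ 2 ∧ g (2 * n + 1) = b * g (n - 1) ^ 2) ∧
      (g (2 * (n + 1)) = g (n + 1) ^ 2 + a * g n ^ 2 ∧ g (2 * (n + 1) + 1) = b * g n ^ 2) := by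
  induction n, hn using Int.leInduction with
  | base => norm_num [hm2, hm1, h0, apply_one hrec hm2 hm1]
  | succ n hn ih =>
    obtain ⟨⟨-, hodd⟩, heven₁, hodd₁⟩ := ih
    simp only [add_sub_cancel_right]
    refine ⟨⟨heven₁, hodd₁⟩, ?_, ?_⟩
    · have hrec_even : g (2 * (n + 1 + 1)) = a * g (2 * (n + 1)) + b * g (2 * n + 1) := by
        have := hrec (2 * (n + 1 + 1)) (by omega)
        convert this using 4 <;> ring
      have hrec_half : g (n + 1 + 1) = a * g n + b * g (n - 1) := by
        have := hrec (n + 1 + 1) (by omega)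
        convert this using 4 <;> ring
      rw [hrec_even, heven₁, hodd, hrec_half]
      linear_combination (-a * b * g n * g (n - 1)) * CharTwo.two_eq_zero (R := R)
    · have hrec_odd :
          g (2 * (n + 1 + 1) + 1) = a * g (2 * (n + 1) + 1) + b * g (2 * (n + 1)) := by
        have := hrec (2 * (n + 1 + 1) + 1) (by omega)
        convert this using 4 <;> ring
      rw [hrec_odd, hodd₁, heven₁]
      linear_combination (a * b * g n ^ 2) * CharTwo.two_eq_zero (R := R)

theorem apply_two_mul_add_one (h0 : g 0 = 1) (n : ℤ) (hn : -1 ≤ n) :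
    g (2 * n + 1) = b * g (n - 1) ^ 2 :=
  (apply_two_mul_and_two_mul_add_one hrec hm2 hm1 h0 n hn).1.2

theorem apply_two_pow_sub_three (h0 : g 0 = 1) (t : ℕ) (ht : 2 ≤ t) : g (2 ^ t - 3) = 0 := by
  induction t, ht using Nat.le_induction with
  | base => simpa using apply_one hrec hm2 hm1
  | succ t _ ih =>
    have hpow : (1 : ℤ) ≤ 2 ^ t := one_le_pow₀ (by norm_num)
    have hodd := apply_two_mul_add_one hrec hm2 hm1 h0 (2 ^ t - 2) (by omega)
    rw [show (2 : ℤ) * (2 ^ t - 2) + 1 = 2 ^ (t + 1) - 3 by ring,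
      show (2 : ℤ) ^ t - 2 - 1 = 2 ^ t - 3 by ring, ih] at hodd
    simpa using hodd

end CharTwoRecurrence

open MvPolynomial

/-- In `ℤ₂[w₂,w₃]` (with `X 0 = w₂`, `X 1 = w₃`), with `g₀ = 1`,
`g_{-1} = g_{-2} = 0` and `g_r = w₂ g_{r-2} + w₃ g_{r-3}` for `r ≥ 1` (the `k = 3` case),
`g_{2^t - 3} = 0` for every `t ≥ 2`. -/
theorem stmt_8 (g : ℤ → MvPolynomial (Fin 2) (ZMod 2))
    (hneg : ∀ r : ℤ, -2 ≤ r → r < 0 → g r = 0)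
    (h0 : g 0 = 1)
    (hrec : ∀ r : ℤ, 1 ≤ r → g r = X 0 * g (r - 2) + X 1 * g (r - 3)) :
    ∀ t : ℕ, 2 ≤ t → g ((2 : ℤ) ^ t - 3) = 0 :=
  CharTwoRecurrence.apply_two_pow_sub_three hrec (hneg (-2) le_rfl (by norm_num))
    (hneg (-1) (by norm_num) (by norm_num)) h0
end

section
/- Let $g_r \in \mathbb{Z}_2[w_2,w_3,w_4]$ satisfy $g_0=1$, $g_{-1}=g_{-2}=g_{-3}=0$, $g_r = w_2 g_{r-2} + w_3 g_{r-3} + w_4 g_{r-4}$ for $r\geq 1$. Then for every $t\geq 2$, the monomial $w_2^{2^{t-1}-1}$ appears in $g_{2^t-2}$ with nonzero coefficient, and the monomial $w_2^{2^{t-1}-2}w_3$ appears in $g_{2^t-1}$ with nonzero coefficient. In particular, neither $g_{2^t-2}$ nor $g_{2^t-1}$ is divisible by $w_4$. -/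
/-!
Unwinding the recurrence, the coefficient of `w₂^i w₃^j w₄^k` in `g_r` counts the orderings
of `i` steps of length `2`, `j` of length `3` and `k` of length `4` summing to `r`. So
`w₂^a` has coefficient `1` in `g_{2a}`, and `w₂^a w₃` has coefficient `a + 1` in `g_{2a+3}`
(the position of the single `3`-step); for `a = 2^{t-1} - 2`, which is even, this is `1`
in characteristic `2`.
-/

open MvPolynomial

namespace MvPolynomial

variable {σ R : Type*} [CommSemiring R]

theorem coeff_X_mul_eq_zero_of_eq_zero {m : σ →₀ ℕ} {s : σ} (p : MvPolynomial σ R)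
    (hm : m s = 0) : coeff m (X s * p) = 0 := by
  classical
  simp [coeff_X_mul', Finsupp.mem_support_iff, hm]

theorem not_X_dvd_of_coeff_ne_zero {m : σ →₀ ℕ} {s : σ} {p : MvPolynomial σ R}
    (hp : coeff m p ≠ 0) (hm : m s = 0) : ¬ X s ∣ p := by
  rintro ⟨q, rfl⟩
  exact hp (coeff_X_mul_eq_zero_of_eq_zero q hm)

end MvPolynomial

section Recurrence

variable {R : Type*} [CommSemiring R] {g : ℤ → MvPolynomial (Fin 3) R}
  (hrec : ∀ r : ℤ, 1 ≤ r → g r = X 0 * g (r - 2) + X 1 * g (r - 3) + X 2 * g (r - 4))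
include hrec

theorem coeff_single_zero_two_mul (h0 : g 0 = 1) (a : ℕ) :
    coeff (Finsupp.single 0 a) (g (2 * a)) = 1 := by
  induction a with
  | zero => simp [h0]
  | succ a ih =>
    have hr := hrec (2 * (a + 1)) (by omega)
    rw [show 2 * ((a : ℤ) + 1) - 2 = 2 * a by ring] at hr
    rw [Nat.cast_succ, hr, coeff_add, coeff_add,
      show Finsupp.single (0 : Fin 3) (a + 1) = Finsupp.single 0 1 + Finsupp.single 0 a by
        rw [← Finsupp.single_add, add_comm],
      coeff_X_mul, ih, coeff_X_mul_eq_zero_of_eq_zero _ (by simp),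
      coeff_X_mul_eq_zero_of_eq_zero _ (by simp), add_zero, add_zero]

theorem eq_X_one_at_three (hneg : ∀ r : ℤ, -3 ≤ r → r < 0 → g r = 0) (h0 : g 0 = 1) :
    g 3 = X 1 := by
  have h1 : g 1 = 0 := by
    rw [hrec 1 le_rfl]
    norm_num [hneg]
  rw [hrec 3 (by norm_num)]
  norm_num [h0, h1, hneg]

theorem coeff_single_zero_add_single_one_two_mul_add_three
    (hneg : ∀ r : ℤ, -3 ≤ r → r < 0 → g r = 0) (h0 : g 0 = 1) (a : ℕ) :
    coeff (Finsupp.single 0 a + Finsupp.single 1 1) (g (2 * a + 3)) = a + 1 := by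
  induction a with
  | zero => simp [eq_X_one_at_three hrec hneg h0, coeff_X]
  | succ a ih =>
    have hr := hrec (2 * (a + 1) + 3) (by omega)
    rw [show 2 * ((a : ℤ) + 1) + 3 - 2 = 2 * a + 3 by ring,
      show 2 * ((a : ℤ) + 1) + 3 - 3 = 2 * (a + 1 : ℕ) by push_cast; ring] at hr
    have hw₂ : coeff (Finsupp.single 0 (a + 1) + Finsupp.single 1 1)
        (X 0 * g (2 * a + 3) : MvPolynomial (Fin 3) R) = a + 1 := by
      rw [show Finsupp.single (0 : Fin 3) (a + 1) + Finsupp.single 1 1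
          = Finsupp.single 0 1 + (Finsupp.single 0 a + Finsupp.single 1 1) by
          rw [← add_assoc, ← Finsupp.single_add, add_comm 1],
        coeff_X_mul, ih]
    have hw₃ : coeff (Finsupp.single 0 (a + 1) + Finsupp.single 1 1)
        (X 1 * g (2 * ((a + 1 : ℕ) : ℤ))) = 1 := by
      rw [add_comm, coeff_X_mul, coeff_single_zero_two_mul hrec h0]
    rw [Nat.cast_succ, hr, coeff_add, coeff_add, hw₂, hw₃,
      coeff_X_mul_eq_zero_of_eq_zero _ (by simp), add_zero, Nat.cast_succ]

end Recurrence

/-- In `ℤ₂[w₂,w₃,w₄]` (with `X 0 = w₂`, `X 1 = w₃`, `X 2 = w₄`), for every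
`t ≥ 2` the monomial `w₂^{2^{t-1}-1}` appears in `g_{2^t-2}` with coefficient `1`, the
monomial `w₂^{2^{t-1}-2} w₃` appears in `g_{2^t-1}` with coefficient `1`, and in
particular neither `g_{2^t-2}` nor `g_{2^t-1}` is divisible by `w₄`. -/
theorem stmt_9 (g : ℤ → MvPolynomial (Fin 3) (ZMod 2))
    (hneg : ∀ r : ℤ, -3 ≤ r → r < 0 → g r = 0)
    (h0 : g 0 = 1)
    (hrec : ∀ r : ℤ, 1 ≤ r →
      g r = X 0 * g (r - 2) + X 1 * g (r - 3) + X 2 * g (r - 4)) :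
    ∀ t : ℕ, 2 ≤ t →
      coeff (Finsupp.single 0 (2 ^ (t - 1) - 1)) (g ((2 : ℤ) ^ t - 2)) = 1 ∧
      coeff (Finsupp.single 0 (2 ^ (t - 1) - 2) + Finsupp.single 1 1)
        (g ((2 : ℤ) ^ t - 1)) = 1 ∧
      ¬ (X 2 : MvPolynomial (Fin 3) (ZMod 2)) ∣ g ((2 : ℤ) ^ t - 2) ∧
      ¬ (X 2 : MvPolynomial (Fin 3) (ZMod 2)) ∣ g ((2 : ℤ) ^ t - 1) := by
  intro t ht
  obtain ⟨n, rfl⟩ : ∃ n, t = n + 2 := ⟨t - 2, by omega⟩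
  have hpow : 2 ≤ 2 ^ (n + 1) := Nat.le_self_pow (by omega) 2
  have hsub₁ : (2 : ℤ) ^ (n + 2) - 2 = 2 * ((2 ^ (n + 1) - 1 : ℕ) : ℤ) := by
    rw [Nat.cast_sub (by omega)]; push_cast; ring
  have hsub₂ : (2 : ℤ) ^ (n + 2) - 1 = 2 * ((2 ^ (n + 1) - 2 : ℕ) : ℤ) + 3 := by
    rw [Nat.cast_sub hpow]; push_cast; ring
  have hA := coeff_single_zero_two_mul hrec h0 (2 ^ (n + 1) - 1)
  have hB := coeff_single_zero_add_single_one_two_mul_add_three hrec hneg h0 (2 ^ (n + 1) - 2)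
  have hcoeff : ((2 ^ (n + 1) - 2 : ℕ) : ZMod 2) + 1 = 1 := by
    rw [(ZMod.natCast_eq_zero_iff_even).2, zero_add]
    exact (Nat.even_pow.2 ⟨even_two, by omega⟩).tsub even_two
  rw [← hsub₁] at hA
  rw [← hsub₂, hcoeff] at hB
  rw [show n + 2 - 1 = n + 1 by omega]
  exact ⟨hA, hB, not_X_dvd_of_coeff_ne_zero (ne_of_eq_of_ne hA one_ne_zero) (by simp),
    not_X_dvd_of_coeff_ne_zero (ne_of_eq_of_ne hB one_ne_zero) (by simp)⟩
end

section
/- Let $g_r \in \mathbb{Z}_2[w_2,w_3,w_4]$ satisfy $g_0=1$, $g_{-1}=g_{-2}=g_{-3}=0$, $g_r = w_2 g_{r-2} + w_3 g_{r-3} + w_4 g_{r-4}$ for $r\geq 1$. Then with respect to the lexicographic monomial ordering with $w_3 < w_2 < w_4$, the leading monomial of $g_{2^t}$ is $w_4^{2^{t-2}}$ for every $t\geq 2$. -/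
/-! Giving `w₂, w₃, w₄` the weights `2, 3, 4`, the recurrence shows that `g_r` is weighted
homogeneous of degree `r`. A monomial `w₂^a w₃^b w₄^c` of weight `4n` has `c ≤ n`, with equality
only for `w₄^n`; and the coefficient of `w₄^n` in `g_{4n}` is that of `w₄^{n-1}` in `g_{4n-4}`,
hence `1`. Take `n = 2^{t-2}`. -/

open MvPolynomial

namespace GRecurrence

/-- `w_i = X (i - 2)` gets weight `i`. -/
def weights : Fin 3 → ℤ := ![2, 3, 4]

theorem weight_weights_apply (d : Fin 3 →₀ ℕ) :
    Finsupp.weight weights d = 2 * (d 0 : ℤ) + 3 * d 1 + 4 * d 2 := by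
  simp [Finsupp.weight_apply, Finsupp.sum_fintype, Fin.sum_univ_three, weights]
  ring

variable {R : Type*} [CommSemiring R]

theorem isWeightedHomogeneous (g : ℤ → MvPolynomial (Fin 3) R)
    (hneg : ∀ r : ℤ, -3 ≤ r → r < 0 → g r = 0) (h0 : g 0 = 1)
    (hrec : ∀ r : ℤ, 1 ≤ r →
      g r = X 0 * g (r - 2) + X 1 * g (r - 3) + X 2 * g (r - 4))
    (r : ℤ) (hr : -3 ≤ r) : IsWeightedHomogeneous weights (g r) r := by
  rcases lt_trichotomy r 0 with hr0 | rfl | hr0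
  · rw [hneg r hr hr0]
    exact isWeightedHomogeneous_zero R weights r
  · rw [h0]
    exact isWeightedHomogeneous_one R weights
  · have term (i : Fin 3) (k : ℤ) (hk : weights i = k)
        (hg : IsWeightedHomogeneous weights (g (r - k)) (r - k)) :
        IsWeightedHomogeneous weights (X i * g (r - k)) r := by
      simpa [hk] using (isWeightedHomogeneous_X R weights i).mul hg
    rw [hrec r hr0]
    refine ((term 0 2 rfl ?_).add (term 1 3 rfl ?_)).add (term 2 4 rfl ?_) <;>
      exact isWeightedHomogeneous g hneg h0 hrec _ (by omega)
termination_by r.toNat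

theorem coeff_single_four_mul (g : ℤ → MvPolynomial (Fin 3) R) (h0 : g 0 = 1)
    (hrec : ∀ r : ℤ, 1 ≤ r →
      g r = X 0 * g (r - 2) + X 1 * g (r - 3) + X 2 * g (r - 4))
    (n : ℕ) : coeff (Finsupp.single 2 n) (g (4 * n)) = 1 := by
  induction n with
  | zero => simp [h0]
  | succ n ih =>
    have hsingle : (Finsupp.single 2 (n + 1) : Fin 3 →₀ ℕ)
        = Finsupp.single 2 1 + Finsupp.single 2 n := by
      rw [← Finsupp.single_add, Nat.add_comm]
    rw [hrec _ (by omega), coeff_add, coeff_add, coeff_X_mul', coeff_X_mul',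
      hsingle, coeff_X_mul, show (4 * (n + 1 : ℕ) : ℤ) - 4 = 4 * n by push_cast; ring, ih]
    simp

theorem exponent_le_of_mem_support_four_mul (g : ℤ → MvPolynomial (Fin 3) R)
    (hneg : ∀ r : ℤ, -3 ≤ r → r < 0 → g r = 0) (h0 : g 0 = 1)
    (hrec : ∀ r : ℤ, 1 ≤ r →
      g r = X 0 * g (r - 2) + X 1 * g (r - 3) + X 2 * g (r - 4))
    (n : ℕ) {d : Fin 3 →₀ ℕ} (hd : d ∈ (g (4 * n)).support) :
    d 2 < n ∨ (d 2 = n ∧ d 0 = 0 ∧ d 1 = 0) := by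
  have hweight := isWeightedHomogeneous g hneg h0 hrec (4 * n) (by omega)
    (mem_support_iff.mp hd)
  rw [weight_weights_apply] at hweight
  omega

end GRecurrence

/-- In `ℤ₂[w₂,w₃,w₄]` (with `X 0 = w₂`, `X 1 = w₃`, `X 2 = w₄`), for every
`t ≥ 2` the leading monomial of `g_{2^t}` with respect to the lexicographic order with
`w₃ < w₂ < w₄` (compare the `w₄`-exponent first, then `w₂`, then `w₃`) is `w₄^{2^{t-2}}`:
this monomial has coefficient `1` and every exponent vector in the support is
lexicographically `≤` it. -/
theorem stmt_10 (g : ℤ → MvPolynomial (Fin 3) (ZMod 2))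
    (hneg : ∀ r : ℤ, -3 ≤ r → r < 0 → g r = 0)
    (h0 : g 0 = 1)
    (hrec : ∀ r : ℤ, 1 ≤ r →
      g r = X 0 * g (r - 2) + X 1 * g (r - 3) + X 2 * g (r - 4)) :
    ∀ t : ℕ, 2 ≤ t →
      coeff (Finsupp.single 2 (2 ^ (t - 2))) (g ((2 : ℤ) ^ t)) = 1 ∧
      ∀ d ∈ (g ((2 : ℤ) ^ t)).support,
        d 2 < 2 ^ (t - 2) ∨
        (d 2 = 2 ^ (t - 2) ∧ (d 0 < 0 ∨ (d 0 = 0 ∧ d 1 ≤ 0))) := by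
  intro t ht
  have hpow : (2 : ℤ) ^ t = 4 * ((2 ^ (t - 2) : ℕ) : ℤ) := by
    obtain ⟨s, rfl⟩ := Nat.exists_eq_add_of_le' ht
    push_cast
    ring
  rw [hpow]
  refine ⟨GRecurrence.coeff_single_four_mul g h0 hrec _, fun d hd => ?_⟩
  have := GRecurrence.exponent_le_of_mem_support_four_mul g hneg h0 hrec _ hd
  omega
end

section
/- Let $t\geq 3$ and let $g_r \in \mathbb{Z}_2[w_2,w_3,w_4]$ satisfy the recurrence $g_r = w_2 g_{r-2} + w_3 g_{r-3} + w_4 g_{r-4}$ with $g_0=1$, $g_{-1}=g_{-2}=g_{-3}=0$. With respect to the lexicographic monomial ordering with $w_3 < w_2 < w_4$, the leading monomial of $g_{2^t-3+2^i}$ equals $w_2^{2^{t-1}-2^i} w_3^{2^i-1}$ for every $0\leq i\leq t-1$. -/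
/-!
Unwinding the recurrence, the coefficient of `w₂^a w₃^b w₄^c` in `g_r` is the trinomial
coefficient `(a+b+c)! / (a! b! c!)` when `2a + 3b + 4c = r`, and `0` otherwise. By Lucas'
theorem it is odd only if `a`, `b`, `c` have pairwise disjoint binary digits, and then so do
`a / 2`, `b / 2`, `c / 2`. Following the parities of `2a + 3b + 4c + 3 = 2^t + 2^i` through
the halvings forces `c = 0` and `a + b < 2^(t-1)`, so the exponent of `w₂` is at most
`2^(t-1) - 2^i`, with equality only for `b = 2^i - 1`. That monomial has coefficient
`choose (2^(t-1) - 1) (2^i - 1)`, which is odd.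
-/

open MvPolynomial

namespace WeightedCompositions

def trinomial (a b c : ℕ) : ℕ := (a + b + c).choose a * (b + c).choose b

lemma choose_eq_ite_add {n : ℕ} (hn : n ≠ 0) (k : ℕ) :
    n.choose k = (if 0 < k then (n - 1).choose (k - 1) else 0) + (n - 1).choose k := by
  obtain ⟨n, rfl⟩ := Nat.exists_eq_succ_of_ne_zero hn
  cases k <;> simp [Nat.choose_succ_succ']

lemma trinomial_eq_add {a b c : ℕ} (h : a + b + c ≠ 0) :
    trinomial a b c = (if 0 < a then trinomial (a - 1) b c else 0) +
      (if 0 < b then trinomial a (b - 1) c else 0) +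
      (if 0 < c then trinomial a b (c - 1) else 0) := by
  unfold trinomial
  rw [choose_eq_ite_add h a]
  by_cases hbc : b + c = 0
  · obtain ⟨rfl, rfl⟩ : b = 0 ∧ c = 0 := by omega
    simp [Nat.choose_eq_zero_of_lt (by omega : a - 1 < a)]
  · rw [choose_eq_ite_add hbc b]
    rcases a with _ | a <;> rcases b with _ | b <;> rcases c with _ | c <;>
      simp_all <;> ring_nf

lemma odd_choose_add_half {m n : ℕ} (h : Odd ((m + n).choose m)) :
    m % 2 + n % 2 ≤ 1 ∧ Odd ((m / 2 + n / 2).choose (m / 2)) := by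
  have lucas : (m + n).choose m % 2 =
      ((m + n) % 2).choose (m % 2) * ((m + n) / 2).choose (m / 2) % 2 :=
    Choose.choose_modEq_choose_mod_mul_choose_div_nat
  rw [Nat.odd_iff] at h ⊢
  by_cases hboth : m % 2 = 1 ∧ n % 2 = 1
  · have e : (m + n) % 2 = 0 := by omega
    simp [e, hboth.1, h] at lucas
  · have e : (m + n) / 2 = m / 2 + n / 2 := by omega
    have hunit : ((m + n) % 2).choose (m % 2) = 1 := by
      rcases (by omega : (m + n) % 2 = m % 2 ∨ m % 2 = 0) with e' | e' <;> simp [e']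
    rw [hunit, one_mul, e] at lucas
    omega

lemma odd_choose_two_pow_sub_one {m k : ℕ} (hk : k < 2 ^ m) : Odd ((2 ^ m - 1).choose k) := by
  induction m generalizing k with
  | zero => simp_all
  | succ m ih =>
    have lucas : (2 ^ (m + 1) - 1).choose k % 2 =
        ((2 ^ (m + 1) - 1) % 2).choose (k % 2) * ((2 ^ (m + 1) - 1) / 2).choose (k / 2) % 2 :=
      Choose.choose_modEq_choose_mod_mul_choose_div_nat
    have hpow : 2 ^ (m + 1) = 2 * 2 ^ m := pow_succ' 2 m
    have e : (2 ^ (m + 1) - 1) % 2 = 1 ∧ (2 ^ (m + 1) - 1) / 2 = 2 ^ m - 1 := by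
      have := Nat.one_le_two_pow (n := m)
      omega
    have hhalf := Nat.odd_iff.mp (ih (k := k / 2) (by omega))
    rw [Nat.odd_iff, lucas, e.1, e.2]
    rcases Nat.mod_two_eq_zero_or_one k with h | h <;> simp [h, hhalf]

lemma odd_trinomial_half {a b c : ℕ} (h : Odd (trinomial a b c)) :
    a % 2 + b % 2 + c % 2 ≤ 1 ∧ Odd (trinomial (a / 2) (b / 2) (c / 2)) := by
  obtain ⟨hab, hbc⟩ := Nat.odd_mul.mp h
  rw [add_assoc] at hab
  obtain ⟨pa, ha⟩ := odd_choose_add_half hab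
  obtain ⟨pb, hb⟩ := odd_choose_add_half hbc
  have e : (b + c) / 2 = b / 2 + c / 2 := by omega
  rw [e, ← add_assoc] at ha
  exact ⟨by omega, Nat.odd_mul.mpr ⟨ha, hb⟩⟩

lemma odd_trinomial_two_pow_sub {i k : ℕ} (hik : i ≤ k) :
    Odd (trinomial (2 ^ k - 2 ^ i) (2 ^ i - 1) 0) := by
  have hle : 2 ^ i ≤ 2 ^ k := Nat.pow_le_pow_right two_pos hik
  have hpos := Nat.one_le_two_pow (n := i)
  rw [trinomial, add_zero, add_zero, Nat.choose_self, mul_one,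
    show 2 ^ k - 2 ^ i + (2 ^ i - 1) = 2 ^ k - 1 by omega]
  exact odd_choose_two_pow_sub_one (by omega)

lemma add_three_ne_two_pow_of_odd_trinomial {a b c : ℕ} (h : Odd (trinomial a b c)) (u : ℕ) :
    2 * a + 3 * b + 4 * c + 3 ≠ 2 ^ u := by
  induction u generalizing a b c with
  | zero => simp
  | succ u ih =>
    obtain ⟨hpar, hhalf⟩ := odd_trinomial_half h
    have := ih hhalf
    rw [pow_succ]
    omega

/- Halve `(a, b, c)`: for `i > 0` the weight is odd, so `b` is odd and `i` drops by one; for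
`i = 0` an odd `c` is excluded by the previous lemma, and `i` becomes `0` or `1` according as
`a` is odd or even. -/
theorem eq_zero_and_add_lt_of_odd_trinomial {a b c i t : ℕ} (h : Odd (trinomial a b c))
    (hit : i < t) (hw : 2 * a + 3 * b + 4 * c + 3 = 2 ^ t + 2 ^ i) :
    c = 0 ∧ a + b < 2 ^ (t - 1) := by
  induction t generalizing i a b c with
  | zero => omega
  | succ t ih =>
    obtain ⟨hpar, hhalf⟩ := odd_trinomial_half h
    rw [pow_succ] at hw
    rw [Nat.add_sub_cancel]
    rcases i with _ | j
    · have hne := add_three_ne_two_pow_of_odd_trinomial hhalf t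
      rcases t with _ | _ | t
      · omega
      · omega
      · have h0 := ih hhalf (i := 0)
        have h1 := ih hhalf (i := 1)
        rw [pow_succ] at h0 h1 hw hne ⊢
        simp only [Nat.add_sub_cancel] at h0 h1
        omega
    · have hj := ih hhalf (i := j) (by omega)
      rw [pow_succ] at hw
      rcases t with _ | t
      · omega
      · rw [pow_succ]
        simp only [Nat.add_sub_cancel] at hj
        omega

def weight (d : Fin 3 →₀ ℕ) : ℕ := 2 * d 0 + 3 * d 1 + 4 * d 2

lemma weight_eq_zero_iff {d : Fin 3 →₀ ℕ} : weight d = 0 ↔ d = 0 := by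
  refine ⟨fun h ↦ ?_, fun h ↦ by simp [h, weight]⟩
  ext j
  fin_cases j <;> simp [weight] at h ⊢ <;> omega

lemma weight_tsub_single {d : Fin 3 →₀ ℕ} {j : Fin 3} (hj : 0 < d j) :
    weight (d - Finsupp.single j 1) + (j + 2) = weight d := by
  fin_cases j <;> simp [weight, Finsupp.tsub_apply] at hj ⊢ <;> omega

theorem coeff_of_recurrence {R : Type*} [CommSemiring R] {g : ℤ → MvPolynomial (Fin 3) R}
    (hneg : ∀ r : ℤ, -3 ≤ r → r < 0 → g r = 0) (h0 : g 0 = 1)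
    (hrec : ∀ r : ℤ, 1 ≤ r → g r = X 0 * g (r - 2) + X 1 * g (r - 3) + X 2 * g (r - 4))
    (n : ℕ) (d : Fin 3 →₀ ℕ) :
    coeff d (g n) = if weight d = n then (trinomial (d 0) (d 1) (d 2) : R) else 0 := by
  induction n using Nat.strong_induction_on generalizing d with
  | _ n ih =>
  rcases Nat.eq_zero_or_pos n with rfl | hn
  · rw [Nat.cast_zero, h0, coeff_one]
    by_cases h : d = 0
    · simp [h, weight, trinomial]
    · rw [if_neg (Ne.symm h), if_neg (mt weight_eq_zero_iff.mp h)]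
  have hsum : g n = ∑ j : Fin 3, X j * g (n - (j + 2 : ℕ)) := by
    rw [hrec n (by omega), Fin.sum_univ_three]
    norm_num
  have hterm (j : Fin 3) : coeff d (X j * g (n - (j + 2 : ℕ))) = if weight d = n then
      (if 0 < d j then (trinomial ((d - Finsupp.single j 1 : Fin 3 →₀ ℕ) 0)
        ((d - Finsupp.single j 1 : Fin 3 →₀ ℕ) 1) ((d - Finsupp.single j 1 : Fin 3 →₀ ℕ) 2) : R)
        else 0) else 0 := by
    simp only [coeff_X_mul', Finsupp.mem_support_iff, ← Nat.pos_iff_ne_zero]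
    by_cases hj : 0 < d j
    · have hw := weight_tsub_single hj
      by_cases hjn : j + 2 ≤ n
      · rw [if_pos hj, if_pos hj, ← Nat.cast_sub hjn, ih _ (by omega)]
        congr 1
        apply propext
        omega
      · rw [if_pos hj, hneg _ (by have := j.isLt; omega) (by omega)]
        simp [show weight d ≠ n by omega]
    · simp [hj]
  rw [hsum, coeff_sum, Fintype.sum_congr _ _ hterm]
  split_ifs with hw
  · have hd : d 0 + d 1 + d 2 ≠ 0 := by
      unfold weight at hw
      omega
    simp [Fin.sum_univ_three, Finsupp.tsub_apply, trinomial_eq_add hd]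
  · simp

lemma weight_eq_and_odd_of_mem_support {g : ℤ → MvPolynomial (Fin 3) (ZMod 2)}
    (hneg : ∀ r : ℤ, -3 ≤ r → r < 0 → g r = 0) (h0 : g 0 = 1)
    (hrec : ∀ r : ℤ, 1 ≤ r → g r = X 0 * g (r - 2) + X 1 * g (r - 3) + X 2 * g (r - 4))
    {n : ℕ} {d : Fin 3 →₀ ℕ} (hd : d ∈ (g n).support) :
    weight d = n ∧ Odd (trinomial (d 0) (d 1) (d 2)) := by
  rw [mem_support_iff, coeff_of_recurrence hneg h0 hrec] at hd
  split_ifs at hd with hw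
  · exact ⟨hw, Nat.not_even_iff_odd.mp (mt ZMod.natCast_eq_zero_iff_even.mpr hd)⟩
  · exact absurd rfl hd

end WeightedCompositions

open WeightedCompositions in
/-- For `t ≥ 3` and `0 ≤ i ≤ t-1`, the leading monomial of
`g_{2^t - 3 + 2^i}` with respect to the lexicographic order with `w₃ < w₂ < w₄`
(compare the `w₄`-exponent first, then `w₂`, then `w₃`) is `w₂^{2^{t-1}-2^i} w₃^{2^i-1}`:
this monomial has coefficient `1` and every exponent vector in the support is
lexicographically `≤` it. (Here `X 0 = w₂`, `X 1 = w₃`, `X 2 = w₄`.) -/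
theorem stmt_11 (t : ℕ) (ht : 3 ≤ t)
    (g : ℤ → MvPolynomial (Fin 3) (ZMod 2))
    (hneg : ∀ r : ℤ, -3 ≤ r → r < 0 → g r = 0)
    (h0 : g 0 = 1)
    (hrec : ∀ r : ℤ, 1 ≤ r →
      g r = X 0 * g (r - 2) + X 1 * g (r - 3) + X 2 * g (r - 4)) :
    ∀ i : ℕ, i ≤ t - 1 →
      coeff (Finsupp.single 0 (2 ^ (t - 1) - 2 ^ i) + Finsupp.single 1 (2 ^ i - 1))
        (g ((2 : ℤ) ^ t - 3 + 2 ^ i)) = 1 ∧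
      ∀ d ∈ (g ((2 : ℤ) ^ t - 3 + 2 ^ i)).support,
        d 2 < 0 ∨
        (d 2 = 0 ∧ (d 0 < 2 ^ (t - 1) - 2 ^ i ∨
          (d 0 = 2 ^ (t - 1) - 2 ^ i ∧ d 1 ≤ 2 ^ i - 1))) := by
  intro i hi
  have hit : i < t := by omega
  have hpow_t : 2 ^ t = 2 * 2 ^ (t - 1) := by rw [← pow_succ', Nat.sub_add_cancel (by omega)]
  have hpow_i : 2 ^ i ≤ 2 ^ (t - 1) := Nat.pow_le_pow_right two_pos hi
  have hpos_i := Nat.one_le_two_pow (n := i)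
  have hindex : (2 : ℤ) ^ t - 3 + 2 ^ i = ((2 ^ t + 2 ^ i - 3 : ℕ) : ℤ) := by
    rw [Nat.cast_sub (by omega)]
    push_cast
    ring
  rw [hindex]
  refine ⟨?_, fun d hd ↦ ?_⟩
  · rw [coeff_of_recurrence hneg h0 hrec, if_pos (by simp [weight]; omega)]
    simpa using (odd_trinomial_two_pow_sub hi).natCast_zmod_two
  · obtain ⟨hw, hodd⟩ := weight_eq_and_odd_of_mem_support hneg h0 hrec hd
    unfold weight at hw
    obtain ⟨hc, hab⟩ := eq_zero_and_add_lt_of_odd_trinomial hodd hit (by omega)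
    right
    omega
end

section
/- Let $t\geq 3$ and consider the ideal $J = (g_{2^t-2}, g_{2^t-1}, g_{2^t}) \unlhd \mathbb{Z}_2[w_2,w_3,w_4]$, where $g_r$ satisfy $g_r = w_2 g_{r-2}+w_3 g_{r-3}+w_4 g_{r-4}$, $g_0=1$, $g_{-1}=g_{-2}=g_{-3}=0$. Then $J$ contains no nonzero polynomial divisible by $w_4$ whose degree (with $\deg w_i = i$) is less than $2^t$. -/
set_option maxHeartbeats 1000000

open MvPolynomial

namespace Stmt13Aux

noncomputable def W : Fin 3 → ℕ := fun i : Fin 3 => (i : ℕ) + 2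

lemma weight_eq (μ : Fin 3 →₀ ℕ) :
    Finsupp.weight W μ = 2 * μ 0 + 3 * μ 1 + 4 * μ 2 := by
  rw [Finsupp.weight_apply, Finsupp.sum_fintype _ _ (by intro i; simp)]
  simp [Fin.sum_univ_three, W]
  ring

lemma weight_pos (μ : Fin 3 →₀ ℕ) (h : μ ≠ 0) : 2 ≤ Finsupp.weight W μ := by
  by_contra hc
  apply h
  rw [weight_eq] at hc
  have h0 : μ 0 = 0 := by omega
  have h1 : μ 1 = 0 := by omega
  have h2 : μ 2 = 0 := by omega
  ext i
  fin_cases i <;> simp [h0, h1, h2]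

lemma coeff_mul_eq_zero (p q : MvPolynomial (Fin 3) (ZMod 2)) (k m : ℕ)
    (hp : ∀ x, coeff x p ≠ 0 → k ≤ Finsupp.weight W x)
    (hq : IsWeightedHomogeneous W q m)
    (μ : Fin 3 →₀ ℕ) (hμ : Finsupp.weight W μ < k + m) :
    coeff μ (p * q) = 0 := by
  rw [coeff_mul]
  apply Finset.sum_eq_zero
  rintro ⟨x, y⟩ hxy
  rw [Finset.HasAntidiagonal.mem_antidiagonal] at hxy
  by_contra hne
  rcases mul_ne_zero_iff.mp hne with ⟨hx, hy⟩
  have h1 : k ≤ Finsupp.weight W x := hp x hx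
  have h2 : Finsupp.weight W y = m := hq hy
  have : Finsupp.weight W μ = Finsupp.weight W x + Finsupp.weight W y := by
    rw [← hxy, map_add]
  omega

end Stmt13Aux

open Stmt13Aux

/-- For `t ≥ 3`, the ideal `J = (g_{2^t-2}, g_{2^t-1}, g_{2^t})` of
`ℤ₂[w₂,w₃,w₄]` (with `X 0 = w₂`, `X 1 = w₃`, `X 2 = w₄`, graded with `deg wᵢ = i`)
contains no nonzero polynomial divisible by `w₄` of (weighted total) degree less
than `2^t`. -/
theorem stmt_13 (t : ℕ) (ht : 3 ≤ t)
    (g : ℤ → MvPolynomial (Fin 3) (ZMod 2))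
    (hneg : ∀ r : ℤ, -3 ≤ r → r < 0 → g r = 0)
    (h0 : g 0 = 1)
    (hrec : ∀ r : ℤ, 1 ≤ r →
      g r = X 0 * g (r - 2) + X 1 * g (r - 3) + X 2 * g (r - 4)) :
    ∀ f ∈ Ideal.span ({g ((2:ℤ)^t - 2), g ((2:ℤ)^t - 1), g ((2:ℤ)^t)} :
        Set (MvPolynomial (Fin 3) (ZMod 2))),
      (X 2 : MvPolynomial (Fin 3) (ZMod 2)) ∣ f →
      weightedTotalDegree (fun i : Fin 3 => (i : ℕ) + 2) f < 2 ^ t →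
      f = 0 := by
  have hg1 : g (-1) = 0 := hneg (-1) (by norm_num) (by norm_num)
  have hg2 : g (-2) = 0 := hneg (-2) (by norm_num) (by norm_num)
  have hg3 : g (-3) = 0 := hneg (-3) (by norm_num) (by norm_num)
  -- homogeneity of g m
  have homog : ∀ m : ℕ, IsWeightedHomogeneous W (g m) m := by
    intro m
    induction m using Nat.strong_induction_on with
    | _ m ih =>
      match m with
      | 0 =>
        simpa [h0] using isWeightedHomogeneous_one (ZMod 2) W
      | 1 =>
        have hr := hrec 1 le_rfl
        norm_num [hg1, hg2, hg3] at hr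
        rw [show ((1:ℕ):ℤ) = 1 by norm_num, hr]
        exact isWeightedHomogeneous_zero _ _ _
      | 2 =>
        have hr := hrec 2 (by norm_num)
        norm_num [h0, hg1, hg2] at hr
        rw [show ((2:ℕ):ℤ) = 2 by norm_num, hr]
        exact isWeightedHomogeneous_X _ W 0
      | 3 =>
        have hr := hrec 3 (by norm_num)
        norm_num [hg1] at hr
        rw [show ((3:ℕ):ℤ) = 3 by norm_num, hr]
        have hX0 : IsWeightedHomogeneous W (X 0 * g ((1:ℕ):ℤ)) (2 + 1) :=
          (isWeightedHomogeneous_X _ W 0).mul (ih 1 (by norm_num))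
        have hX1 : IsWeightedHomogeneous W (X 1 * g ((0:ℕ):ℤ)) (3 + 0) :=
          (isWeightedHomogeneous_X _ W 1).mul (ih 0 (by norm_num))
        norm_num at hX0 hX1
        exact hX0.add hX1
      | (m + 4) =>
        have hr := hrec ((m : ℤ) + 4) (by omega)
        have e2 : ((m:ℤ) + 4) - 2 = ((m + 2 : ℕ) : ℤ) := by push_cast; ring
        have e3 : ((m:ℤ) + 4) - 3 = ((m + 1 : ℕ) : ℤ) := by push_cast; ring
        have e4 : ((m:ℤ) + 4) - 4 = ((m : ℕ) : ℤ) := by push_cast; ring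
        rw [e2, e3, e4] at hr
        rw [show ((m + 4 : ℕ) : ℤ) = (m : ℤ) + 4 by push_cast; ring, hr]
        have hX0 : IsWeightedHomogeneous W (X 0 * g ((m+2 : ℕ):ℤ)) (2 + (m+2)) :=
          (isWeightedHomogeneous_X _ W 0).mul (ih (m+2) (by omega))
        have hX1 : IsWeightedHomogeneous W (X 1 * g ((m+1 : ℕ):ℤ)) (3 + (m+1)) :=
          (isWeightedHomogeneous_X _ W 1).mul (ih (m+1) (by omega))
        have hX2 : IsWeightedHomogeneous W (X 2 * g ((m : ℕ):ℤ)) (4 + m) :=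
          (isWeightedHomogeneous_X _ W 2).mul (ih m (by omega))
        rw [show 2 + (m+2) = m + 4 by omega] at hX0
        rw [show 3 + (m+1) = m + 4 by omega] at hX1
        rw [show 4 + m = m + 4 by omega] at hX2
        exact (hX0.add hX1).add hX2
  -- the evaluation to dual numbers
  set φ : MvPolynomial (Fin 3) (ZMod 2) →ₐ[ZMod 2] DualNumber (ZMod 2) :=
    aeval ![1, DualNumber.eps, 0] with hφ
  have φ0 : φ (X 0) = 1 := by simp [hφ]
  have φ1 : φ (X 1) = DualNumber.eps := by simp [hφ]
  have φ2 : φ (X 2) = 0 := by simp [hφ]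
  have hchar : ∀ x : DualNumber (ZMod 2), x + x = 0 := by
    intro x
    rw [← two_smul (ZMod 2) x, show (2 : ZMod 2) = 0 by decide, zero_smul]
  set v : ℕ → DualNumber (ZMod 2) := fun m =>
    if m % 2 = 0 then 1 else (if m % 4 = 3 then DualNumber.eps else 0) with hv
  have phi_g : ∀ m : ℕ, φ (g m) = v m := by
    intro m
    induction m using Nat.strong_induction_on with
    | _ m ih =>
      match m with
      | 0 => simp [h0, hv]
      | 1 =>
        have hr := hrec 1 le_rfl
        norm_num [hg1, hg2, hg3] at hr
        rw [show ((1:ℕ):ℤ) = 1 by norm_num, hr]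
        simp [hv]
      | 2 =>
        have hr := hrec 2 (by norm_num)
        norm_num [h0, hg1, hg2] at hr
        rw [show ((2:ℕ):ℤ) = 2 by norm_num, hr]
        simp [hv, φ0]
      | 3 =>
        have hr := hrec 3 (by norm_num)
        norm_num [hg1] at hr
        rw [show ((3:ℕ):ℤ) = 3 by norm_num, hr]
        have h1' : φ (g ((1:ℕ):ℤ)) = v 1 := ih 1 (by norm_num)
        have h0' : φ (g ((0:ℕ):ℤ)) = v 0 := ih 0 (by norm_num)
        norm_num at h1' h0'
        simp only [map_add, map_mul, φ0, φ1, h1', h0', hv]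
        norm_num
      | (m + 4) =>
        have hr := hrec ((m : ℤ) + 4) (by omega)
        have e2 : ((m:ℤ) + 4) - 2 = ((m + 2 : ℕ) : ℤ) := by push_cast; ring
        have e3 : ((m:ℤ) + 4) - 3 = ((m + 1 : ℕ) : ℤ) := by push_cast; ring
        have e4 : ((m:ℤ) + 4) - 4 = ((m : ℕ) : ℤ) := by push_cast; ring
        rw [e2, e3, e4] at hr
        rw [show ((m + 4 : ℕ) : ℤ) = (m : ℤ) + 4 by push_cast; ring, hr]
        have h2' := ih (m+2) (by omega)
        have h1' := ih (m+1) (by omega)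
        simp only [map_add, map_mul, φ0, φ1, φ2, h2', h1', one_mul, zero_mul, add_zero]
        -- now: v (m+2) + ε * v (m+1) = v (m+4)
        have h4 : m % 4 = 0 ∨ m % 4 = 1 ∨ m % 4 = 2 ∨ m % 4 = 3 := by omega
        rcases h4 with h | h | h | h <;>
          · simp only [hv, show (m+2) % 2 = m % 4 % 2 by omega,
              show (m+4) % 2 = m % 4 % 2 by omega,
              show (m+1) % 2 = (m % 4 + 1) % 2 by omega,
              show (m+2) % 4 = (m % 4 + 2) % 4 by omega,
              show (m+4) % 4 = m % 4 by omega,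
              show (m+1) % 4 = (m % 4 + 1) % 4 by omega, h]
            norm_num
            first
              | rw [DualNumber.eps_mul_eps]
              | skip
            first
              | exact (hchar _)
              | rfl
              | skip
  -- main argument
  intro f hf hdvd hdeg
  set n : ℕ := 2 ^ t with hn
  have hn8 : 8 ≤ n := by
    calc (8:ℕ) = 2 ^ 3 := by norm_num
    _ ≤ 2 ^ t := Nat.pow_le_pow_right (by norm_num) ht
  have h4n : 4 ∣ n := by
    rw [hn, show (4:ℕ) = 2^2 by norm_num]
    exact pow_dvd_pow 2 (by omega)
  have hcast : ((n : ℕ) : ℤ) = (2:ℤ)^t := by rw [hn]; push_cast; ring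
  have eA : (2:ℤ)^t - 2 = ((n - 2 : ℕ) : ℤ) := by omega
  have eB : (2:ℤ)^t - 1 = ((n - 1 : ℕ) : ℤ) := by omega
  have eC : (2:ℤ)^t = ((n : ℕ) : ℤ) := by omega
  rw [eA, eB, eC] at hf
  obtain ⟨a, z, hz, hfz⟩ := Submodule.mem_span_insert.mp hf
  obtain ⟨b, c, hbc⟩ := Ideal.mem_span_pair.mp hz
  rw [smul_eq_mul, ← hbc] at hfz
  set A := g ((n - 2 : ℕ) : ℤ) with hA
  set B := g ((n - 1 : ℕ) : ℤ) with hB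
  set C' := g ((n : ℕ) : ℤ) with hC
  set a0 := coeff 0 a with ha0
  set b0 := coeff 0 b with hb0
  set h : MvPolynomial (Fin 3) (ZMod 2) :=
    (a - MvPolynomial.C a0) * A + (b - MvPolynomial.C b0) * B + c * C' with hh
  have hf2 : f = MvPolynomial.C a0 * A + MvPolynomial.C b0 * B + h := by
    rw [hh, hfz]; ring
  have homA : IsWeightedHomogeneous W A (n - 2) := homog (n - 2)
  have homB : IsWeightedHomogeneous W B (n - 1) := homog (n - 1)
  have homC : IsWeightedHomogeneous W C' n := homog n
  have hWeq : (fun i : Fin 3 => (i : ℕ) + 2) = W := rfl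
  rw [hWeq] at hdeg
  have hfc : ∀ μ : Fin 3 →₀ ℕ, n ≤ Finsupp.weight W μ → coeff μ f = 0 := by
    intro μ hμ
    by_contra hc
    have := le_weightedTotalDegree W (φ := f) (d := μ) (mem_support_iff.mpr hc)
    omega
  have hh0 : h = 0 := by
    apply MvPolynomial.ext
    intro μ
    rw [coeff_zero]
    by_cases hw : Finsupp.weight W μ < n
    · rw [hh, coeff_add, coeff_add,
          coeff_mul_eq_zero _ _ 2 (n-2) (fun x hx => by
            apply weight_pos
            intro hx0
            apply hx
            rw [hx0, coeff_sub, coeff_zero_C, ha0, sub_self]) homA μ (by omega),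
          coeff_mul_eq_zero _ _ 2 (n-1) (fun x hx => by
            apply weight_pos
            intro hx0
            apply hx
            rw [hx0, coeff_sub, coeff_zero_C, hb0, sub_self]) homB μ (by omega),
          coeff_mul_eq_zero _ _ 0 n (fun x _ => Nat.zero_le _) homC μ (by omega)]
      ring
    · push_neg at hw
      have h1 : coeff μ f = 0 := hfc μ hw
      have h2 : coeff μ A = 0 := homA.coeff_eq_zero μ (by omega)
      have h3 : coeff μ B = 0 := homB.coeff_eq_zero μ (by omega)
      have h4 : coeff μ f = a0 * coeff μ A + b0 * coeff μ B + coeff μ h := by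
        rw [hf2, coeff_add, coeff_add, coeff_C_mul, coeff_C_mul]
      rw [h1, h2, h3] at h4
      simpa using h4.symm
  have hfAB : f = MvPolynomial.C a0 * A + MvPolynomial.C b0 * B := by
    rw [hf2, hh0, add_zero]
  -- evaluate
  obtain ⟨q, hq⟩ := hdvd
  have hφf : φ f = 0 := by rw [hq, map_mul, φ2, zero_mul]
  have hvA : φ A = 1 := by
    rw [hA, phi_g (n-2), hv]
    have : (n - 2) % 2 = 0 := by omega
    simp [this]
  have hvB : φ B = DualNumber.eps := by
    rw [hB, phi_g (n-1), hv]
    have e1 : (n - 1) % 2 = 1 := by omega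
    have e2 : (n - 1) % 4 = 3 := by omega
    simp [e1, e2]
  have E : algebraMap (ZMod 2) (DualNumber (ZMod 2)) a0 * 1
      + algebraMap (ZMod 2) (DualNumber (ZMod 2)) b0 * DualNumber.eps = 0 := by
    have hCa : ∀ r : ZMod 2,
        φ (MvPolynomial.C r) = algebraMap (ZMod 2) (DualNumber (ZMod 2)) r := fun r => by
      rw [hφ, aeval_C]
    have E0 := hφf
    rw [hfAB, map_add, map_mul, map_mul, hvA, hvB, hCa, hCa] at E0
    exact E0
  have hA0 : a0 = 0 := by
    have := congrArg TrivSqZeroExt.fst E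
    simpa [TrivSqZeroExt.algebraMap_eq_inl] using this
  have hB0 : b0 = 0 := by
    have := congrArg TrivSqZeroExt.snd E
    simpa [TrivSqZeroExt.algebraMap_eq_inl] using this
  rw [hfAB, hA0, hB0]
  simp
end

section
/- In $\mathbb{Z}_2[w_1,w_2,w_3,w_4]$, suppose $w_1 w_4 h = \alpha\, \overline w_{2^t-3}$ for some $h \in \mathbb{Z}_2[w_1,w_2,w_3,w_4]$, some $\alpha \in \mathbb{Z}_2$, and some $t\geq 3$, where $\overline w_r$ is the degree-$r$ component of the inverse of $1+w_1+w_2+w_3+w_4$ in the power series ring. Then $\alpha = 0$ and hence $w_1 w_4 h = 0$. -/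
open MvPolynomial

/-! Sending `w₁ ↦ x` and `w₂, w₃, w₄ ↦ 0` turns the defining recurrence of the `w̄_r` into
`w̄_r = -x · w̄_{r-1}`, so `w̄_r ↦ (-x)^r ≠ 0`, whereas `w₁ w₄ h ↦ 0`. -/

section CollapseToFirst

variable {R : Type*} [CommRing R] {k : ℕ}

variable (R k) in
noncomputable def collapseToFirst : MvPolynomial (Fin (k + 1)) R →ₐ[R] Polynomial R :=
  aeval (Pi.single 0 Polynomial.X)

theorem collapseToFirst_X_zero : collapseToFirst R k (X 0) = Polynomial.X := by
  rw [collapseToFirst, aeval_X, Pi.single_eq_same]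

theorem collapseToFirst_X_succ (j : Fin k) : collapseToFirst R k (X j.succ) = 0 := by
  rw [collapseToFirst, aeval_X, Pi.single_eq_of_ne (Fin.succ_ne_zero j)]

theorem collapseToFirst_of_recurrence (wb : ℤ → MvPolynomial (Fin (k + 1)) R)
    (h0 : wb 0 = 1)
    (hid : ∀ r : ℤ, 1 ≤ r → wb r + ∑ i : Fin (k + 1), X i * wb (r - ((i : ℤ) + 1)) = 0)
    (n : ℕ) : collapseToFirst R k (wb n) = (-Polynomial.X) ^ n := by
  induction n with
  | zero => simp [h0]
  | succ n ih =>
    have hrec := congrArg (collapseToFirst R k) (hid (n + 1) (by omega))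
    simp only [map_add, map_sum, map_mul, Fin.sum_univ_succ, collapseToFirst_X_succ, zero_mul,
      Finset.sum_const_zero, add_zero, collapseToFirst_X_zero, Fin.val_zero, Nat.cast_zero,
      zero_add, add_sub_cancel_right, ih] at hrec
    push_cast
    rw [eq_neg_of_add_eq_zero_left hrec]
    ring

end CollapseToFirst

theorem stmt_18_general
    (wb : ℤ → MvPolynomial (Fin 4) (ZMod 2))
    (h0 : wb 0 = 1)
    (hid : ∀ r : ℤ, 1 ≤ r →
      wb r + ∑ i : Fin 4, X i * wb (r - ((i : ℤ) + 1)) = 0)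
    (t : ℕ) (ht : 3 ≤ t)
    (h : MvPolynomial (Fin 4) (ZMod 2)) (α : ZMod 2)
    (heq : X 0 * X 3 * h = α • wb ((2 : ℤ) ^ t - 3)) :
    α = 0 ∧ X 0 * X 3 * h = 0 := by
  have hdeg : (2 : ℤ) ^ t - 3 = ((2 ^ t - 3 : ℕ) : ℤ) := by
    have : 3 ≤ 2 ^ t := le_trans (by norm_num) (Nat.pow_le_pow_right two_pos ht)
    push_cast [this]
    ring
  have hw₄ : collapseToFirst (ZMod 2) 3 (X 3) = 0 := collapseToFirst_X_succ 2
  have himage := congrArg (collapseToFirst (ZMod 2) 3) heq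
  rw [map_smul, hdeg, collapseToFirst_of_recurrence wb h0 hid, map_mul, map_mul, hw₄, mul_zero,
    zero_mul, eq_comm, smul_eq_zero] at himage
  have hα : α = 0 :=
    himage.resolve_right (pow_ne_zero _ (neg_ne_zero.mpr Polynomial.X_ne_zero))
  exact ⟨hα, by rw [heq, hα, zero_smul]⟩

/-- In `ℤ₂[w₁,w₂,w₃,w₄]` (with `X i = w_{i+1}`), let `w̄_r` be defined by
the power-series identity `(1 + w₁ + w₂ + w₃ + w₄) · ∑ r, w̄_r = 1` (encoded degreewise:
`w̄₀ = 1`, `w̄_r = 0` for `r < 0`, `w̄_r + ∑_{i=1}^{4} wᵢ w̄_{r-i} = 0` for `r ≥ 1`).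
If `w₁ w₄ h = α · w̄_{2^t-3}` for some `h`, some `α ∈ ℤ₂` and some `t ≥ 3`, then
`α = 0` and hence `w₁ w₄ h = 0`. -/
theorem stmt_18
    (wb : ℤ → MvPolynomial (Fin 4) (ZMod 2))
    (hneg : ∀ r : ℤ, r < 0 → wb r = 0)
    (h0 : wb 0 = 1)
    (hid : ∀ r : ℤ, 1 ≤ r →
      wb r + ∑ i : Fin 4, X i * wb (r - ((i : ℤ) + 1)) = 0)
    (t : ℕ) (ht : 3 ≤ t)
    (h : MvPolynomial (Fin 4) (ZMod 2)) (α : ZMod 2)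
    (heq : X 0 * X 3 * h = α • wb ((2 : ℤ) ^ t - 3)) :
    α = 0 ∧ X 0 * X 3 * h = 0 :=
  stmt_18_general wb h0 hid t ht h α heq
end
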